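/- arXiv:1301.0172 — 13 statements merged into one kernel-verified Lean document; each statement's English description precedes it below -/
import Mathlib

section
/- Let $X \in \mathbb{R}^{n\times p}$ with $X^T X = I_p$, let $E \in \mathbb{R}^{n\times p}$ with $X^T E$ skew-symmetric, set $W = -(I_n - XX^T)E$ and $J(\tau) = I_p + \frac{\tau^2}{4}W^T W + \frac{\tau}{2}X^T E$. Then $Y(\tau) = (2X + \tau W)J(\tau)^{-1} - X$ satisfies $Y(\tau)^T Y(\tau) = I_p$ for all $\tau \geq 0$. -/
open Matrix

/-- The update scheme `Y(τ) = (2X + τW) J(τ)⁻¹ - X` stays on the Stiefel manifold. -/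
theorem stmt_1 (n p : ℕ) (X E : Matrix (Fin n) (Fin p) ℝ)
    (hX : Xᵀ * X = 1) (hskew : (Xᵀ * E)ᵀ = -(Xᵀ * E))
    (W : Matrix (Fin n) (Fin p) ℝ) (hW : W = -((1 - X * Xᵀ) * E))
    (J : ℝ → Matrix (Fin p) (Fin p) ℝ)
    (hJ : ∀ τ : ℝ, J τ = 1 + (τ ^ 2 / 4) • (Wᵀ * W) + (τ / 2) • (Xᵀ * E))
    (Y : ℝ → Matrix (Fin n) (Fin p) ℝ)
    (hY : ∀ τ : ℝ, Y τ = ((2 : ℝ) • X + τ • W) * (J τ)⁻¹ - X) :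
    ∀ τ : ℝ, 0 ≤ τ → (Y τ)ᵀ * Y τ = 1 := by
  intro τ _
  have dnn : ∀ (m : ℕ) (v : Fin m → ℝ), 0 ≤ v ⬝ᵥ v := fun m v =>
    Finset.sum_nonneg fun i _ => mul_self_nonneg _
  -- X ᵀ W = 0
  have hXW : Xᵀ * W = 0 := by
    rw [hW]
    simp only [Matrix.mul_neg, Matrix.sub_mul, Matrix.mul_sub, Matrix.one_mul]
    rw [← Matrix.mul_assoc, ← Matrix.mul_assoc, hX, Matrix.one_mul]
    simp
  have hWX : Wᵀ * X = 0 := by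
    have := congrArg Matrix.transpose hXW
    simpa [Matrix.transpose_mul] using this
  -- the skew part contributes nothing to the quadratic form
  have hskewq : ∀ v : Fin p → ℝ, v ⬝ᵥ ((Xᵀ * E) *ᵥ v) = 0 := by
    intro v
    have h1 : v ⬝ᵥ ((Xᵀ * E) *ᵥ v) = (Xᵀ * E)ᵀ *ᵥ v ⬝ᵥ v := by
      rw [Matrix.mulVec_transpose, Matrix.dotProduct_mulVec, dotProduct_comm]
    rw [hskew, Matrix.neg_mulVec, neg_dotProduct, dotProduct_comm] at h1
    have h2 : (Xᵀ * E) *ᵥ v ⬝ᵥ v = 0 := by linarith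
    rw [dotProduct_comm]
    exact h2
  -- J τ is invertible
  have hUnit : IsUnit (J τ) := by
    rw [← Matrix.mulVec_injective_iff_isUnit]
    have key : ∀ v : Fin p → ℝ, J τ *ᵥ v = 0 → v = 0 := by
      intro v hv
      have h0 : v ⬝ᵥ (J τ *ᵥ v) = 0 := by rw [hv]; simp
      rw [hJ τ] at h0
      have hexp : v ⬝ᵥ ((1 + (τ ^ 2 / 4) • (Wᵀ * W) + (τ / 2) • (Xᵀ * E)) *ᵥ v)
          = v ⬝ᵥ v + (τ ^ 2 / 4) * ((W *ᵥ v) ⬝ᵥ (W *ᵥ v)) := by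
        rw [Matrix.add_mulVec, Matrix.add_mulVec, dotProduct_add,
          dotProduct_add, Matrix.smul_mulVec, Matrix.smul_mulVec,
          dotProduct_smul, dotProduct_smul, hskewq, Matrix.one_mulVec]
        have h5 : v ⬝ᵥ ((Wᵀ * W) *ᵥ v) = (W *ᵥ v) ⬝ᵥ (W *ᵥ v) := by
          rw [← Matrix.mulVec_mulVec, Matrix.dotProduct_mulVec, Matrix.vecMul_transpose]
        rw [h5]
        simp [smul_eq_mul]
      rw [hexp] at h0
      have h1 : (0:ℝ) ≤ v ⬝ᵥ v := dnn _ v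
      have h2 : (0:ℝ) ≤ (τ ^ 2 / 4) * ((W *ᵥ v) ⬝ᵥ (W *ᵥ v)) :=
        mul_nonneg (by positivity) (dnn _ _)
      have h3 : v ⬝ᵥ v = 0 := by linarith
      exact dotProduct_self_eq_zero.mp h3
    intro a b hab
    have h4 : J τ *ᵥ (a - b) = 0 := by
      rw [Matrix.mulVec_sub, hab, sub_self]
    exact sub_eq_zero.mp (key _ h4)
  -- algebraic computation
  have hdet : IsUnit (J τ).det := (Matrix.isUnit_iff_isUnit_det _).mp hUnit
  have hJJ : J τ * (J τ)⁻¹ = 1 := Matrix.mul_nonsing_inv _ hdet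
  set B := (J τ)⁻¹ with hB
  have hBJ : Bᵀ * (J τ)ᵀ = 1 := by
    rw [← Matrix.transpose_mul, hJJ, Matrix.transpose_one]
  set M := (2 : ℝ) • X + τ • W with hM
  have hMX : Mᵀ * X = (2 : ℝ) • 1 := by
    rw [hM, Matrix.transpose_add, Matrix.transpose_smul, Matrix.transpose_smul,
      Matrix.add_mul, Matrix.smul_mul, Matrix.smul_mul, hX, hWX, smul_zero, add_zero]
  have hXM : Xᵀ * M = (2 : ℝ) • 1 := by
    rw [hM, Matrix.mul_add, Matrix.mul_smul, Matrix.mul_smul, hX, hXW, smul_zero, add_zero]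
  have hMM : Mᵀ * M = (4 : ℝ) • 1 + (τ ^ 2) • (Wᵀ * W) := by
    rw [hM]
    simp only [Matrix.transpose_add, Matrix.transpose_smul, Matrix.add_mul, Matrix.mul_add,
      Matrix.smul_mul, Matrix.mul_smul, hX, hXW, hWX, smul_zero, add_zero, zero_add,
      smul_smul]
    module
  have hsum : (2 : ℝ) • (J τ) + (2 : ℝ) • (J τ)ᵀ = (4 : ℝ) • 1 + (τ ^ 2) • (Wᵀ * W) := by
    rw [hJ τ]
    simp only [Matrix.transpose_add, Matrix.transpose_smul, Matrix.transpose_one,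
      Matrix.transpose_mul, Matrix.transpose_transpose, hskew, smul_neg]
    module
  rw [hY τ, ← hB, ← hM]
  have expand : (M * B - X)ᵀ * (M * B - X)
      = Bᵀ * (Mᵀ * M) * B - Bᵀ * (Mᵀ * X) - (Xᵀ * M) * B + Xᵀ * X := by
    simp only [Matrix.transpose_sub, Matrix.transpose_mul, Matrix.sub_mul, Matrix.mul_sub,
      Matrix.mul_assoc]
    abel
  have a1 : Bᵀ * (J τ) * B = Bᵀ := by rw [Matrix.mul_assoc, hJJ, Matrix.mul_one]
  have a2 : Bᵀ * (J τ)ᵀ * B = B := by rw [hBJ, Matrix.one_mul]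
  rw [expand, hMM, ← hsum, hMX, hXM, hX]
  rw [Matrix.mul_add, Matrix.mul_smul, Matrix.mul_smul, Matrix.add_mul,
    Matrix.smul_mul, Matrix.smul_mul, a1, a2]
  simp only [Matrix.mul_smul, Matrix.smul_mul, Matrix.mul_one, Matrix.one_mul]
  abel
end

section
/- Let $X \in \mathbb{R}^{n\times p}$ with $X^T X = I_p$, $E \in \mathbb{R}^{n\times p}$ with $X^T E$ skew-symmetric, $W = -(I_n - XX^T)E$, and $J = I_p + \frac{\tau^2}{4}W^T W + \frac{\tau}{2}X^T E$. Then the condition number of $J$ satisfies $\mathrm{cond}(J) \leq (5 + \upsilon^2)/4$ where $\upsilon = \tau \|E\|_F$. -/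
open Matrix

/-- Spectral norm of a real square matrix. -/
noncomputable def spec {p : ℕ} (A : Matrix (Fin p) (Fin p) ℝ) : ℝ :=
  ‖(Matrix.toEuclideanCLM (𝕜 := ℝ) A : EuclideanSpace ℝ (Fin p) →L[ℝ] EuclideanSpace ℝ (Fin p))‖

/-- Frobenius norm of a real matrix. -/
noncomputable def frob {n p : ℕ} (A : Matrix (Fin n) (Fin p) ℝ) : ℝ :=
  Real.sqrt (Matrix.trace (Aᵀ * A))

/-!
Write `K = XᵀE`. Since `K` is skew and `WᵀW` is positive semidefinite, `⟪x, J x⟫ ≥ ‖x‖²`, so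
`‖J x‖ ≥ ‖x‖`; hence `J` is invertible with `‖J⁻¹‖₂ ≤ 1`. On the other side
`‖J‖₂ ≤ 1 + τ²/4 ‖W‖_F² + |τ|/2 ‖K‖_F`, and because `1 - XXᵀ` is an orthogonal projector,
`‖W‖_F² + ‖K‖_F² = ‖E‖_F²`. Eliminating `‖W‖_F²`, the bound `(5 + υ²)/4` exceeds the estimate by
`(1 - |τ| ‖K‖_F)²/4 ≥ 0`.
-/

open scoped Matrix.Norms.L2Operator RealInnerProductSpace

lemma spec_eq_l2_opNorm {p : ℕ} (A : Matrix (Fin p) (Fin p) ℝ) : spec A = ‖A‖ := rfl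

section Frobenius

variable {n p : ℕ}

lemma trace_transpose_mul_self_eq_sum_sq (A : Matrix (Fin n) (Fin p) ℝ) :
    trace (Aᵀ * A) = ∑ i, ∑ j, A i j ^ 2 := by
  rw [Finset.sum_comm]
  simp [trace, mul_apply, sq]

lemma frob_nonneg (A : Matrix (Fin n) (Fin p) ℝ) : 0 ≤ frob A :=
  Real.sqrt_nonneg _

lemma frob_sq (A : Matrix (Fin n) (Fin p) ℝ) : frob A ^ 2 = trace (Aᵀ * A) :=
  Real.sq_sqrt (by rw [trace_transpose_mul_self_eq_sum_sq]; positivity)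

lemma frob_neg (A : Matrix (Fin n) (Fin p) ℝ) : frob (-A) = frob A := by
  simp [frob]

lemma l2_opNorm_le_frob (A : Matrix (Fin n) (Fin p) ℝ) : ‖A‖ ≤ frob A := by
  rw [l2_opNorm_def]
  refine ContinuousLinearMap.opNorm_le_bound _ (frob_nonneg A) fun x => ?_
  refine (sq_le_sq₀ (norm_nonneg _) (mul_nonneg (frob_nonneg A) (norm_nonneg x))).mp ?_
  rw [mul_pow, frob_sq, trace_transpose_mul_self_eq_sum_sq, EuclideanSpace.real_norm_sq_eq,
    EuclideanSpace.real_norm_sq_eq, Finset.sum_mul]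
  refine Finset.sum_le_sum fun i _ => ?_
  exact Finset.sum_mul_sq_le_sq_mul_sq Finset.univ (A i) x

lemma frob_sq_add_frob_sq_of_transpose_mul_self_eq_one {X : Matrix (Fin n) (Fin p) ℝ}
    (hX : Xᵀ * X = 1) (E : Matrix (Fin n) (Fin p) ℝ) :
    frob ((1 - X * Xᵀ) * E) ^ 2 + frob (Xᵀ * E) ^ 2 = frob E ^ 2 := by
  have hP : (1 - X * Xᵀ)ᵀ * (1 - X * Xᵀ) = 1 - X * Xᵀ := by
    simp only [transpose_sub, transpose_one, transpose_mul, transpose_transpose, sub_mul,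
      mul_sub, one_mul, mul_one, Matrix.mul_assoc, ← Matrix.mul_assoc Xᵀ X, hX, Matrix.one_mul]
    abel
  rw [frob_sq, frob_sq, frob_sq, ← trace_add, transpose_mul, transpose_mul, Matrix.mul_assoc,
    ← Matrix.mul_assoc (1 - X * Xᵀ)ᵀ, hP]
  congr 1
  simp only [transpose_transpose, Matrix.sub_mul, Matrix.mul_sub, Matrix.one_mul,
    Matrix.mul_assoc]
  abel

end Frobenius

section Coercive

variable {ι κ : Type*} [Fintype ι] [Fintype κ]

lemma dotProduct_mulVec_self_eq_zero_of_transpose_eq_neg {K : Matrix κ κ ℝ} (hK : Kᵀ = -K)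
    (v : κ → ℝ) : v ⬝ᵥ (K *ᵥ v) = 0 := by
  have h : v ⬝ᵥ (K *ᵥ v) = -(v ⬝ᵥ (K *ᵥ v)) := by
    conv_lhs => rw [dotProduct_mulVec, ← mulVec_transpose, hK, dotProduct_comm, neg_mulVec,
      dotProduct_neg]
  linarith

lemma norm_le_norm_apply_of_norm_sq_le_inner {E : Type*} [NormedAddCommGroup E]
    [InnerProductSpace ℝ E] {T : E →L[ℝ] E} (hT : ∀ x, ‖x‖ ^ 2 ≤ ⟪x, T x⟫) (x : E) :
    ‖x‖ ≤ ‖T x‖ := by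
  rcases (norm_nonneg x).eq_or_lt with hx | hx
  · exact hx ▸ norm_nonneg _
  refine le_of_mul_le_mul_left ?_ hx
  calc ‖x‖ * ‖x‖ = ‖x‖ ^ 2 := (sq _).symm
    _ ≤ ⟪x, T x⟫ := hT x
    _ ≤ ‖x‖ * ‖T x‖ := real_inner_le_norm x (T x)

variable [DecidableEq κ]

lemma dotProduct_self_le_dotProduct_mulVec (W : Matrix ι κ ℝ) {K : Matrix κ κ ℝ} (hK : Kᵀ = -K)
    {s : ℝ} (hs : 0 ≤ s) (t : ℝ) (v : κ → ℝ) :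
    v ⬝ᵥ v ≤ v ⬝ᵥ ((1 + s • (Wᵀ * W) + t • K) *ᵥ v) := by
  have hW : 0 ≤ v ⬝ᵥ ((Wᵀ * W) *ᵥ v) := by
    simpa using (posSemidef_conjTranspose_mul_self W).dotProduct_mulVec_nonneg v
  simp only [add_mulVec, one_mulVec, smul_mulVec, dotProduct_add, dotProduct_smul, smul_eq_mul,
    dotProduct_mulVec_self_eq_zero_of_transpose_eq_neg hK, mul_zero, add_zero]
  exact le_add_of_nonneg_right (mul_nonneg hs hW)

lemma l2_opNorm_nonsing_inv_le_one {A : Matrix κ κ ℝ}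
    (hA : ∀ x, ‖x‖ ≤ ‖toEuclideanCLM (𝕜 := ℝ) A x‖) : ‖A⁻¹‖ ≤ 1 := by
  have hunit : IsUnit A := by
    refine mulVec_injective_iff_isUnit.mp fun v w hvw => ?_
    have := hA (WithLp.toLp 2 (v - w))
    rw [toEuclideanCLM_toLp, mulVec_sub, hvw, sub_self] at this
    simpa [sub_eq_zero] using this
  have hAA : A * A⁻¹ = 1 := mul_nonsing_inv A ((isUnit_iff_isUnit_det A).mp hunit)
  rw [cstar_norm_def]
  refine ContinuousLinearMap.opNorm_le_bound _ zero_le_one fun y => ?_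
  calc ‖toEuclideanCLM (𝕜 := ℝ) A⁻¹ y‖
      ≤ ‖toEuclideanCLM (𝕜 := ℝ) A (toEuclideanCLM (𝕜 := ℝ) A⁻¹ y)‖ := hA _
    _ = ‖toEuclideanCLM (𝕜 := ℝ) (A * A⁻¹) y‖ := by rw [map_mul]; rfl
    _ = 1 * ‖y‖ := by rw [hAA, map_one, one_mul]; rfl

end Coercive

lemma l2_opNorm_one_add_smul_le {n p : ℕ} (W : Matrix (Fin n) (Fin p) ℝ)
    (K : Matrix (Fin p) (Fin p) ℝ) {s : ℝ} (hs : 0 ≤ s) (t : ℝ) :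
    ‖1 + s • (Wᵀ * W) + t • K‖ ≤ 1 + s * frob W ^ 2 + |t| * frob K := by
  have hone : ‖(1 : Matrix (Fin p) (Fin p) ℝ)‖ ≤ 1 := by
    rw [cstar_norm_def, map_one]
    exact ContinuousLinearMap.norm_id_le
  have hWW : ‖Wᵀ * W‖ ≤ frob W ^ 2 := by
    rw [← conjTranspose_eq_transpose_of_trivial, l2_opNorm_conjTranspose_mul_self, ← sq]
    exact pow_le_pow_left₀ (norm_nonneg W) (l2_opNorm_le_frob W) 2
  calc ‖1 + s • (Wᵀ * W) + t • K‖
        ≤ ‖(1 : Matrix (Fin p) (Fin p) ℝ)‖ + ‖s • (Wᵀ * W)‖ + ‖t • K‖ := norm_add₃_le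
    _ = ‖(1 : Matrix (Fin p) (Fin p) ℝ)‖ + s * ‖Wᵀ * W‖ + |t| * ‖K‖ := by
        rw [norm_smul, norm_smul, Real.norm_of_nonneg hs, Real.norm_eq_abs]
    _ ≤ 1 + s * frob W ^ 2 + |t| * frob K := by
        gcongr
        exact l2_opNorm_le_frob K

theorem stmt_3_general (n p : ℕ) (X E : Matrix (Fin n) (Fin p) ℝ)
    (hX : Xᵀ * X = 1) (hskew : (Xᵀ * E)ᵀ = -(Xᵀ * E))
    (W : Matrix (Fin n) (Fin p) ℝ) (hW : W = -((1 - X * Xᵀ) * E))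
    (τ : ℝ)
    (J : Matrix (Fin p) (Fin p) ℝ)
    (hJ : J = 1 + (τ ^ 2 / 4) • (Wᵀ * W) + (τ / 2) • (Xᵀ * E))
    (υ : ℝ) (hυ : υ = τ * frob E) :
    spec J * spec J⁻¹ ≤ (5 + υ ^ 2) / 4 := by
  rw [spec_eq_l2_opNorm, spec_eq_l2_opNorm]
  have hquarter : (0 : ℝ) ≤ τ ^ 2 / 4 := by positivity
  have hexpand : ∀ x, ‖x‖ ≤ ‖toEuclideanCLM (𝕜 := ℝ) J x‖ := by
    refine norm_le_norm_apply_of_norm_sq_le_inner fun x => ?_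
    rw [inner_toEuclideanCLM, ← real_inner_self_eq_norm_sq,
      EuclideanSpace.inner_eq_star_dotProduct, star_trivial, hJ]
    exact dotProduct_self_le_dotProduct_mulVec W hskew hquarter (τ / 2) _
  have hpyth : frob W ^ 2 + frob (Xᵀ * E) ^ 2 = frob E ^ 2 := by
    rw [hW, frob_neg, frob_sq_add_frob_sq_of_transpose_mul_self_eq_one hX]
  have hnorm : ‖J‖ ≤ 1 + τ ^ 2 / 4 * frob W ^ 2 + |τ / 2| * frob (Xᵀ * E) :=
    hJ ▸ l2_opNorm_one_add_smul_le W (Xᵀ * E) hquarter (τ / 2)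
  calc ‖J‖ * ‖J⁻¹‖ ≤ ‖J‖ :=
        mul_le_of_le_one_right (norm_nonneg _) (l2_opNorm_nonsing_inv_le_one hexpand)
    _ ≤ 1 + τ ^ 2 / 4 * frob W ^ 2 + |τ / 2| * frob (Xᵀ * E) := hnorm
    _ ≤ (5 + υ ^ 2) / 4 := by
        rw [hυ, abs_div, abs_two]
        nlinarith [sq_nonneg (1 - |τ| * frob (Xᵀ * E)), sq_abs τ]

/-- The condition number of `J` satisfies `cond(J) ≤ (5 + υ²)/4` with `υ = τ ‖E‖_F`. -/
theorem stmt_3 (n p : ℕ) (X E : Matrix (Fin n) (Fin p) ℝ)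
    (hX : Xᵀ * X = 1) (hskew : (Xᵀ * E)ᵀ = -(Xᵀ * E))
    (W : Matrix (Fin n) (Fin p) ℝ) (hW : W = -((1 - X * Xᵀ) * E))
    (τ : ℝ) (hτ : 0 ≤ τ)
    (J : Matrix (Fin p) (Fin p) ℝ)
    (hJ : J = 1 + (τ ^ 2 / 4) • (Wᵀ * W) + (τ / 2) • (Xᵀ * E))
    (υ : ℝ) (hυ : υ = τ * frob E) :
    spec J * spec J⁻¹ ≤ (5 + υ ^ 2) / 4 :=
  stmt_3_general n p X E hX hskew W hW τ J hJ υ hυ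
end

section
/- Let $X \in \mathbb{R}^{n\times p}$ with $X^T X = I_p$, $G \in \mathbb{R}^{n\times p}$, $\nabla\mathcal{F} = G - XG^T X$, and for $\rho > 0$ let $D_\rho = G - X(2\rho G^T X + (1-2\rho)X^T G)$. Then $\langle G, D_\rho \rangle = \langle \nabla\mathcal{F}, (I_n + (\rho-1)XX^T)\nabla\mathcal{F} \rangle \geq \min\{\rho,1\}\|\nabla\mathcal{F}\|_F^2$, where $\langle A,B\rangle = \mathrm{tr}(A^T B)$. -/
open Matrix

lemma trace_transpose_mul_self_nonneg {n p : ℕ} (A : Matrix (Fin n) (Fin p) ℝ) :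
    0 ≤ Matrix.trace (Aᵀ * A) := by
  rw [Matrix.trace]
  apply Finset.sum_nonneg
  intro j _
  simp only [Matrix.diag, Matrix.mul_apply, Matrix.transpose_apply]
  exact Finset.sum_nonneg fun i _ => mul_self_nonneg _

/-- `⟨G, D_ρ⟩ = ⟨∇F, (I + (ρ-1) X Xᵀ) ∇F⟩ ≥ min{ρ,1} ‖∇F‖_F²`, so `-D_ρ` is a descent
direction on the Stiefel manifold. -/
theorem stmt_5 (n p : ℕ) (X G : Matrix (Fin n) (Fin p) ℝ) (hX : Xᵀ * X = 1)
    (ρ : ℝ) (hρ : 0 < ρ)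
    (nF : Matrix (Fin n) (Fin p) ℝ) (hnF : nF = G - X * (Gᵀ * X))
    (D : Matrix (Fin n) (Fin p) ℝ)
    (hD : D = G - X * ((2 * ρ) • (Gᵀ * X) + (1 - 2 * ρ) • (Xᵀ * G))) :
    Matrix.trace (Gᵀ * D) = Matrix.trace (nFᵀ * ((1 + (ρ - 1) • (X * Xᵀ)) * nF)) ∧
      min ρ 1 * frob nF ^ 2 ≤ Matrix.trace (Gᵀ * D) := by
  have hX1 : ∀ M : Matrix (Fin p) (Fin p) ℝ, Xᵀ * (X * M) = M := by
    intro M; rw [← Matrix.mul_assoc, hX, Matrix.one_mul]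
  have hX2 : ∀ M : Matrix (Fin p) (Fin n) ℝ, Xᵀ * (X * M) = M := by
    intro M; rw [← Matrix.mul_assoc, hX, Matrix.one_mul]
  -- the equality
  have heq : Matrix.trace (Gᵀ * D) =
      Matrix.trace (nFᵀ * ((1 + (ρ - 1) • (X * Xᵀ)) * nF)) := by
    subst hD hnF
    simp only [Matrix.mul_sub, Matrix.sub_mul, Matrix.mul_add, Matrix.add_mul,
      Matrix.mul_smul, Matrix.smul_mul, Matrix.mul_assoc, hX1, hX2, Matrix.mul_one,
      Matrix.one_mul, Matrix.transpose_sub, Matrix.transpose_mul, Matrix.transpose_transpose,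
      Matrix.trace_sub, Matrix.trace_add, Matrix.trace_smul, smul_eq_mul]
    have h1 : (Xᵀ * (G * (Xᵀ * G))).trace = (Gᵀ * (X * (Gᵀ * X))).trace := by
      rw [← Matrix.trace_transpose]
      simp [Matrix.transpose_mul, Matrix.mul_assoc]
    have h2 : (Xᵀ * (G * (Gᵀ * X))).trace = (Gᵀ * (X * (Xᵀ * G))).trace := by
      rw [← Matrix.mul_assoc, Matrix.trace_mul_comm, Matrix.mul_assoc]
    rw [h1, h2]; ring
  refine ⟨heq, ?_⟩
  -- abbreviations
  set s : ℝ := Matrix.trace (nFᵀ * nF) with hs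
  set t : ℝ := Matrix.trace (nFᵀ * (X * (Xᵀ * nF))) with ht
  have hE : Matrix.trace (nFᵀ * ((1 + (ρ - 1) • (X * Xᵀ)) * nF)) = s + (ρ - 1) * t := by
    simp only [Matrix.mul_add, Matrix.add_mul, Matrix.one_mul, Matrix.smul_mul,
      Matrix.mul_smul, Matrix.mul_assoc, Matrix.trace_add, Matrix.trace_smul, smul_eq_mul,
      hs, ht]
  have ht0 : 0 ≤ t := by
    have : (Xᵀ * nF)ᵀ * (Xᵀ * nF) = nFᵀ * (X * (Xᵀ * nF)) := by
      rw [Matrix.transpose_mul, Matrix.transpose_transpose, Matrix.mul_assoc]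
    have h := trace_transpose_mul_self_nonneg (Xᵀ * nF)
    rwa [this] at h
  have hs0 : 0 ≤ s := trace_transpose_mul_self_nonneg nF
  have hts : t ≤ s := by
    have key : (nF - X * (Xᵀ * nF))ᵀ * (nF - X * (Xᵀ * nF)) =
        nFᵀ * nF - nFᵀ * (X * (Xᵀ * nF)) := by
      simp only [Matrix.transpose_sub, Matrix.transpose_mul, Matrix.transpose_transpose,
        Matrix.mul_sub, Matrix.sub_mul, Matrix.mul_assoc, hX1, hX2]
      abel
    have h := trace_transpose_mul_self_nonneg (nF - X * (Xᵀ * nF))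
    rw [key, Matrix.trace_sub] at h
    linarith
  have hfrob : frob nF ^ 2 = s := Real.sq_sqrt hs0
  rw [heq, hE, hfrob]
  rcases le_total ρ 1 with h | h
  · rw [min_eq_left h]; nlinarith
  · rw [min_eq_right h]; nlinarith
end

section
/- Let $X \in \mathbb{R}^{n\times p}$ with $X^T X = I_p$, and suppose $G \in \mathbb{R}^{n\times p}$ satisfies $X^T G = G^T X$. Set $W = -(I_n - XX^T)G$, $J(\tau) = I_p + \frac{\tau^2}{4}W^T W$, and $Y(\tau) = (2X + \tau W)J(\tau)^{-1} - X$. Then $Y(\tau) = \mathcal{P}(X(2I_p - J(\tau)) + \tau W)$, where $\mathcal{P}(C) = C(C^T C)^{-1/2}$ is the projection onto the Stiefel manifold. -/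
open Matrix

/-- When `XᵀG = GᵀX`, the update scheme coincides with the polar-decomposition
projection `P(M) = M (MᵀM)^{-1/2}` of `M = X(2I - J) + τW`: here `J` is symmetric
positive definite with `MᵀM = J²`, hence `P(M) = M J⁻¹ = Y(τ)`. -/
theorem stmt_8 (n p : ℕ) (X G : Matrix (Fin n) (Fin p) ℝ)
    (hX : Xᵀ * X = 1) (hsym : Xᵀ * G = Gᵀ * X)
    (W : Matrix (Fin n) (Fin p) ℝ) (hW : W = -((1 - X * Xᵀ) * G))
    (τ : ℝ) (hτ : 0 ≤ τ)
    (J : Matrix (Fin p) (Fin p) ℝ) (hJ : J = 1 + (τ ^ 2 / 4) • (Wᵀ * W))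
    (Y : Matrix (Fin n) (Fin p) ℝ)
    (hY : Y = ((2 : ℝ) • X + τ • W) * J⁻¹ - X)
    (M : Matrix (Fin n) (Fin p) ℝ) (hM : M = X * (2 - J) + τ • W) :
    J.PosDef ∧ Mᵀ * M = J * J ∧ Y = M * J⁻¹ := by
  -- J is positive definite
  have hJpos : J.PosDef := by
    have h1 : (τ ^ 2 / 4) • (Wᵀ * W) = ((τ/2) • W)ᵀ * ((τ/2) • W) := by
      simp only [transpose_smul]
      rw [Matrix.smul_mul, Matrix.mul_smul, smul_smul]; congr 1; ring
    have h2 : (((τ/2) • W)ᵀ * ((τ/2) • W)).PosSemidef := by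
      simpa [← conjTranspose_eq_transpose_of_trivial] using
        posSemidef_conjTranspose_mul_self ((τ/2) • W)
    rw [hJ, h1]
    exact Matrix.PosDef.add_posSemidef Matrix.PosDef.one h2
  -- XᵀW = 0
  have hXW : Xᵀ * W = 0 := by
    rw [hW, Matrix.mul_neg, ← Matrix.mul_assoc, Matrix.mul_sub, Matrix.mul_one,
      ← Matrix.mul_assoc, hX, Matrix.one_mul, sub_self, Matrix.zero_mul, neg_zero]
  have hWX : Wᵀ * X = 0 := by
    have := congrArg Matrix.transpose hXW
    simpa using this
  have hJt : Jᵀ = J := by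
    rw [hJ]; simp [Matrix.transpose_add, Matrix.transpose_smul, Matrix.transpose_mul]
  -- helper reassociated facts
  have hX' : ∀ (A : Matrix (Fin p) (Fin p) ℝ), Xᵀ * (X * A) = A := fun A => by
    rw [← Matrix.mul_assoc, hX, Matrix.one_mul]
  have hWX' : ∀ (A : Matrix (Fin p) (Fin p) ℝ), Wᵀ * (X * A) = 0 := fun A => by
    rw [← Matrix.mul_assoc, hWX, Matrix.zero_mul]
  have hMM : Mᵀ * M = J * J := by
    have key : Mᵀ * M = (2 - J)ᵀ * (2 - J) + (τ*τ) • (Wᵀ * W) := by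
      rw [hM]
      simp only [Matrix.transpose_add, Matrix.transpose_mul, Matrix.transpose_smul,
        Matrix.add_mul, Matrix.mul_add, Matrix.smul_mul, Matrix.mul_smul,
        Matrix.mul_assoc, hX', hXW, hWX', Matrix.mul_zero, smul_zero,
        add_zero, zero_add, smul_smul]
    rw [key]
    have h2t : (2 - J)ᵀ = 2 - J := by
      rw [Matrix.transpose_sub, hJt]
      congr 1
      simp [Matrix.transpose_eq_one]
    rw [h2t, hJ]
    have : (2 : Matrix (Fin p) (Fin p) ℝ) - (1 + (τ ^ 2 / 4) • (Wᵀ * W))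
        = 1 - (τ ^ 2 / 4) • (Wᵀ * W) := by
      rw [sub_add_eq_sub_sub, show (2:Matrix (Fin p) (Fin p) ℝ) - 1 = 1 by norm_num]
    rw [this]
    simp only [Matrix.mul_sub, Matrix.sub_mul, Matrix.mul_add, Matrix.add_mul,
      Matrix.smul_mul, Matrix.mul_smul, smul_smul, Matrix.one_mul, Matrix.mul_one]
    module
  refine ⟨hJpos, hMM, ?_⟩
  have hdet : IsUnit J.det := (Matrix.isUnit_iff_isUnit_det J).mp hJpos.isUnit
  have hJJ : J * J⁻¹ = 1 := Matrix.mul_nonsing_inv J hdet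
  rw [hY, hM]
  have h2X : X * (2 : Matrix (Fin p) (Fin p) ℝ) = (2:ℝ) • X := by
    rw [show (2:Matrix (Fin p) (Fin p) ℝ) = 1 + 1 by norm_num, Matrix.mul_add,
      Matrix.mul_one, two_smul]
  rw [Matrix.mul_sub, h2X]
  simp only [Matrix.add_mul, Matrix.sub_mul, Matrix.mul_assoc, hJJ, Matrix.mul_one]
  abel
end

section
/- Let $X \in \mathbb{R}^{n\times p}$ with $X^T X = I_p$, $E \in \mathbb{R}^{n\times p}$ with $X^T E$ skew-symmetric, $W = -(I_n - XX^T)E$, $J(\tau) = I_p + \frac{\tau^2}{4}W^T W + \frac{\tau}{2}X^T E$, and $Y(\tau) = (2X + \tau W)J(\tau)^{-1} - X$. Then $Y(0) = X$ and $Y'(0) = -E$. -/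
/-!
`J(0) = 1` and `J'(0) = ½ Xᵀ E`, so `(J⁻¹)'(0) = -½ Xᵀ E`; the product rule then gives
`Y'(0) = W - X Xᵀ E = -E`.
-/

open Matrix
-- Only the proofs see this norm (any other would do); the statements use the product topology.
open scoped Matrix.Norms.Operator

section MatrixCalculus

variable {l m n : Type*} [Fintype l] [Fintype m] [Fintype n]

section CompleteField

variable {𝕜 : Type*} [NontriviallyNormedField 𝕜] [CompleteSpace 𝕜] {t : 𝕜}

theorem HasDerivAt.matrix_mul {A : 𝕜 → Matrix l m 𝕜} {B : 𝕜 → Matrix m n 𝕜}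
    {A' : Matrix l m 𝕜} {B' : Matrix m n 𝕜} (hA : HasDerivAt A A' t) (hB : HasDerivAt B B' t) :
    HasDerivAt (fun τ => A τ * B τ) (A' * B t + A t * B') t := by
  rw [add_comm]
  exact (mulLinearMap 𝕜).toContinuousBilinearMap.hasDerivAt_of_bilinear (fun _ => hA) fun _ => hB

theorem HasDerivAt.matrix_apply {A : 𝕜 → Matrix m n 𝕜} {A' : Matrix m n 𝕜}
    (hA : HasDerivAt A A' t) (i : m) (j : n) :
    HasDerivAt (fun τ => A τ i j) (A' i j) t :=
  (entryLinearMap 𝕜 𝕜 i j).toContinuousLinearMap.hasFDerivAt.comp_hasDerivAt t hA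

end CompleteField

variable {𝕜 : Type*} [RCLike 𝕜] {t : 𝕜}

theorem HasDerivAt.matrix_inv [DecidableEq m] {J : 𝕜 → Matrix m m 𝕜} {J' : Matrix m m 𝕜}
    (hJ : HasDerivAt J J' t) (ht : IsUnit (J t)) :
    HasDerivAt (fun τ => (J τ)⁻¹) (-((J t)⁻¹ * J' * (J t)⁻¹)) t := by
  obtain ⟨u, hu⟩ := ht
  have hinv := hasFDerivAt_ringInverse (𝕜 := 𝕜) u
  rw [coe_units_inv, hu] at hinv
  have h := hinv.comp_hasDerivAt t hJ
  simp only [_root_.neg_apply, ContinuousLinearMap.mulLeftRight_apply] at h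
  exact h.congr_of_eventuallyEq (.of_forall fun τ => nonsing_inv_eq_ringInverse (J τ))

end MatrixCalculus

theorem stmt_10_general (n p : ℕ) (X E : Matrix (Fin n) (Fin p) ℝ)
    (W : Matrix (Fin n) (Fin p) ℝ) (hW : W = -((1 - X * Xᵀ) * E))
    (J : ℝ → Matrix (Fin p) (Fin p) ℝ)
    (hJ : ∀ τ : ℝ, J τ = 1 + (τ ^ 2 / 4) • (Wᵀ * W) + (τ / 2) • (Xᵀ * E))
    (Y : ℝ → Matrix (Fin n) (Fin p) ℝ)
    (hY : ∀ τ : ℝ, Y τ = ((2 : ℝ) • X + τ • W) * (J τ)⁻¹ - X) :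
    Y 0 = X ∧ ∀ i j, HasDerivAt (fun τ => Y τ i j) (-(E i j)) 0 := by
  have hJ0 : J 0 = 1 := by simp [hJ]
  refine ⟨by simp [hY, hJ0, two_smul], fun i j => ?_⟩
  have hJ' : HasDerivAt J ((2⁻¹ : ℝ) • (Xᵀ * E)) 0 := by
    have h := ((((hasDerivAt_pow 2 (0 : ℝ)).div_const 4).smul_const (Wᵀ * W)).const_add 1).add
      (((hasDerivAt_id (0 : ℝ)).div_const 2).smul_const (Xᵀ * E))
    simp only [Nat.cast_ofNat, Nat.add_one_sub_one, pow_one, mul_zero, zero_div, zero_smul,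
      zero_add, id_eq, one_div] at h
    exact h.congr_of_eventuallyEq (.of_forall hJ)
  have hJinv' : HasDerivAt (fun τ => (J τ)⁻¹) (-((2⁻¹ : ℝ) • (Xᵀ * E))) 0 := by
    have h := hJ'.matrix_inv (by simp [hJ0])
    simpa only [hJ0, inv_one, one_mul, mul_one] using h
  have hfactor' : HasDerivAt (fun τ : ℝ => (2 : ℝ) • X + τ • W) W 0 := by
    have h := ((hasDerivAt_id (0 : ℝ)).smul_const W).const_add ((2 : ℝ) • X)
    simp only [id_eq, one_smul] at h
    exact h
  have hY' : HasDerivAt Y (-E) 0 := by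
    have h := (hfactor'.matrix_mul hJinv').sub_const X
    have hval : W * (J 0)⁻¹ + ((2 : ℝ) • X + (0 : ℝ) • W) * -((2⁻¹ : ℝ) • (Xᵀ * E)) = -E := by
      simp only [hW, Matrix.sub_mul, Matrix.one_mul, Matrix.mul_assoc, neg_sub, hJ0, inv_one,
        Matrix.mul_one, zero_smul, add_zero, Matrix.mul_neg, Matrix.mul_smul, smul_mul, ne_eq,
        OfNat.ofNat_ne_zero, not_false_eq_true, inv_smul_smul₀]
      abel
    rw [hval] at h
    exact h.congr_of_eventuallyEq (.of_forall hY)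
  exact hY'.matrix_apply i j

/-- The curve `Y(τ) = (2X + τW) J(τ)⁻¹ - X` satisfies `Y(0) = X` and `Y'(0) = -E`
(entrywise derivatives). -/
theorem stmt_10 (n p : ℕ) (X E : Matrix (Fin n) (Fin p) ℝ)
    (hX : Xᵀ * X = 1) (hskew : (Xᵀ * E)ᵀ = -(Xᵀ * E))
    (W : Matrix (Fin n) (Fin p) ℝ) (hW : W = -((1 - X * Xᵀ) * E))
    (J : ℝ → Matrix (Fin p) (Fin p) ℝ)
    (hJ : ∀ τ : ℝ, J τ = 1 + (τ ^ 2 / 4) • (Wᵀ * W) + (τ / 2) • (Xᵀ * E))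
    (Y : ℝ → Matrix (Fin n) (Fin p) ℝ)
    (hY : ∀ τ : ℝ, Y τ = ((2 : ℝ) • X + τ • W) * (J τ)⁻¹ - X) :
    Y 0 = X ∧ ∀ i j, HasDerivAt (fun τ => Y τ i j) (-(E i j)) 0 :=
  stmt_10_general n p X E W hW J hJ Y hY
end

section
/- Let $X \in \mathbb{R}^{n\times p}$ with $X^T X = I_p$, $E \in \mathbb{R}^{n\times p}$ with $X^T E$ skew-symmetric, $W = -(I_n - XX^T)E$, and $J = I_p + \frac{\tau^2}{4}W^T W + \frac{\tau}{2}X^T E$. Then $(2J^{-1} - I_p)^T(2J^{-1} - I_p) + \tau^2 J^{-T}W^T W J^{-1} = I_p$, and consequently $\|2J^{-1} - I_p\|_2 \leq 1$ and $\|J^{-1}\|_2 \leq 1$. -/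
/-!
Skew-symmetry of `XᵀE` gives `J + Jᵀ = 2 + (τ²/2) WᵀW`. The symmetric part of `J` is therefore
positive definite, so `J` is invertible, and expanding gives `(2 - J)ᵀ(2 - J) + τ² WᵀW = JᵀJ`.
Conjugating by `J⁻¹` and using `2J⁻¹ - 1 = (2 - J)J⁻¹` yields the identity, which writes
`1 - MᵀM` for `M = 2J⁻¹ - 1` as the Gram matrix of `τWJ⁻¹`; hence `‖M‖ ≤ 1`, and
`J⁻¹ = (M + 1)/2` has norm at most `1` as well.
-/

open Matrix

theorem dotProduct_transpose_mul_self_mulVec {R : Type*} [CommSemiring R] {m n : Type*}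
    [Fintype m] [Fintype n] (B : Matrix m n R) (x : n → R) :
    x ⬝ᵥ ((Bᵀ * B) *ᵥ x) = (B *ᵥ x) ⬝ᵥ (B *ᵥ x) := by
  rw [← mulVec_mulVec, dotProduct_mulVec, vecMul_transpose]

theorem spec_le_one_of_transpose_mul_self_add {m : Type*} [Fintype m] {p : ℕ}
    (M : Matrix (Fin p) (Fin p) ℝ) (B : Matrix m (Fin p) ℝ) (h : Mᵀ * M + Bᵀ * B = 1) :
    spec M ≤ 1 := by
  refine ContinuousLinearMap.opNorm_le_bound _ zero_le_one fun v => ?_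
  have norm_sq : ∀ w : EuclideanSpace ℝ (Fin p), ‖w‖ ^ 2 = w.ofLp ⬝ᵥ w.ofLp := fun w => by
    rw [EuclideanSpace.real_norm_sq_eq]; simp [dotProduct, sq]
  rw [one_mul, ← sq_le_sq₀ (norm_nonneg _) (norm_nonneg _), norm_sq, norm_sq,
    ofLp_toEuclideanCLM, ← dotProduct_transpose_mul_self_mulVec, eq_sub_of_add_eq h, sub_mulVec,
    one_mulVec, dotProduct_sub, dotProduct_transpose_mul_self_mulVec, sub_le_self_iff]
  exact Finset.sum_nonneg fun i _ => mul_self_nonneg _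

theorem spec_le_one_of_spec_two_smul_sub_one_le {p : ℕ} (A : Matrix (Fin p) (Fin p) ℝ)
    (h : spec ((2 : ℝ) • A - 1) ≤ 1) : spec A ≤ 1 := by
  have hA : toEuclideanCLM (𝕜 := ℝ) A
      = (2 : ℝ)⁻¹ • (toEuclideanCLM (𝕜 := ℝ) ((2 : ℝ) • A - 1) + 1) := by
    rw [map_sub, map_smul, map_one]; module
  calc spec A = 2⁻¹ * ‖toEuclideanCLM (𝕜 := ℝ) ((2 : ℝ) • A - 1) + 1‖ := by
        rw [spec, hA, norm_smul]; norm_num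
    _ ≤ 2⁻¹ * (1 + 1) := by
        gcongr
        exact (norm_add_le _ _).trans (add_le_add h ContinuousLinearMap.norm_id_le)
    _ = 1 := by norm_num

theorem isUnit_of_posDef_add_transpose {n : Type*} [Fintype n] [DecidableEq n]
    (J : Matrix n n ℝ) (h : (J + Jᵀ).PosDef) : IsUnit J := by
  rw [isUnit_iff_isUnit_det, isUnit_iff_ne_zero]
  intro hdet
  obtain ⟨v, hv, hJv⟩ := exists_mulVec_eq_zero_iff.mpr hdet
  have hpos := h.dotProduct_mulVec_pos hv
  rw [star_trivial, add_mulVec, dotProduct_add, mulVec_transpose, dotProduct_comm v (v ᵥ* J),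
    ← dotProduct_mulVec, hJv, dotProduct_zero, add_zero] at hpos
  exact hpos.false

theorem transpose_mul_self_eq_of_add_transpose_eq {R : Type*} [CommRing R] {n : Type*}
    [Fintype n] [DecidableEq n] (J Q : Matrix n n R) (h : J + Jᵀ = (2 : R) • 1 + Q) :
    ((2 : R) • 1 - J)ᵀ * ((2 : R) • 1 - J) + (2 : R) • Q = Jᵀ * J := by
  rw [transpose_sub, transpose_smul, transpose_one, eq_sub_of_add_eq' h]
  simp only [sub_mul, mul_sub, smul_mul_assoc, mul_smul_comm, one_mul, mul_one, add_mul]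
  module

theorem two_smul_inv_sub_one_transpose_mul_self_add_eq_one {R : Type*} [CommRing R] {n : Type*}
    [Fintype n] [DecidableEq n] (J K : Matrix n n R) (hJ : IsUnit J)
    (h : ((2 : R) • 1 - J)ᵀ * ((2 : R) • 1 - J) + K = Jᵀ * J) :
    ((2 : R) • J⁻¹ - 1)ᵀ * ((2 : R) • J⁻¹ - 1) + J⁻¹ᵀ * K * J⁻¹ = 1 := by
  have hJJ : J * J⁻¹ = 1 := mul_nonsing_inv J ((isUnit_iff_isUnit_det J).mp hJ)
  have hM : ((2 : R) • 1 - J) * J⁻¹ = (2 : R) • J⁻¹ - 1 := by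
    rw [sub_mul, smul_mul_assoc, one_mul, hJJ]
  calc ((2 : R) • J⁻¹ - 1)ᵀ * ((2 : R) • J⁻¹ - 1) + J⁻¹ᵀ * K * J⁻¹
      = J⁻¹ᵀ * (((2 : R) • 1 - J)ᵀ * ((2 : R) • 1 - J) + K) * J⁻¹ := by
        rw [← hM, transpose_mul]
        simp only [Matrix.add_mul, Matrix.mul_add, Matrix.mul_assoc]
    _ = (J * J⁻¹)ᵀ * (J * J⁻¹) := by
        rw [h, transpose_mul]; simp only [Matrix.mul_assoc]
    _ = 1 := by rw [hJJ, transpose_one, one_mul]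

theorem stmt_11_general (n p : ℕ) (X E : Matrix (Fin n) (Fin p) ℝ)
    (hskew : (Xᵀ * E)ᵀ = -(Xᵀ * E))
    (W : Matrix (Fin n) (Fin p) ℝ)
    (τ : ℝ)
    (J : Matrix (Fin p) (Fin p) ℝ)
    (hJ : J = 1 + (τ ^ 2 / 4) • (Wᵀ * W) + (τ / 2) • (Xᵀ * E)) :
    ((2 : ℝ) • J⁻¹ - 1)ᵀ * ((2 : ℝ) • J⁻¹ - 1) + (τ ^ 2) • ((J⁻¹)ᵀ * (Wᵀ * W) * J⁻¹) = 1 ∧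
      spec ((2 : ℝ) • J⁻¹ - 1) ≤ 1 ∧ spec J⁻¹ ≤ 1 := by
  have hWW : (Wᵀ * W).PosSemidef := by
    simpa only [conjTranspose_eq_transpose_of_trivial] using posSemidef_conjTranspose_mul_self W
  have hsym : J + Jᵀ = (2 : ℝ) • 1 + (τ ^ 2 / 2) • (Wᵀ * W) := by
    rw [hJ]
    simp only [transpose_add, transpose_smul, transpose_one, transpose_mul, transpose_transpose,
      hskew]
    module
  have hunit : IsUnit J := isUnit_of_posDef_add_transpose J <| hsym ▸
    (PosDef.one.smul two_pos).add_posSemidef (hWW.smul (by positivity))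
  have hid : ((2 : ℝ) • J⁻¹ - 1)ᵀ * ((2 : ℝ) • J⁻¹ - 1)
      + (τ ^ 2) • ((J⁻¹)ᵀ * (Wᵀ * W) * J⁻¹) = 1 := by
    have hgram := transpose_mul_self_eq_of_add_transpose_eq J _ hsym
    rw [smul_smul, mul_div_cancel₀ _ two_ne_zero] at hgram
    simpa only [Matrix.mul_smul, Matrix.smul_mul] using
      two_smul_inv_sub_one_transpose_mul_self_add_eq_one J _ hunit hgram
  have hnorm : spec ((2 : ℝ) • J⁻¹ - 1) ≤ 1 := by
    refine spec_le_one_of_transpose_mul_self_add _ (τ • (W * J⁻¹)) ?_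
    rw [transpose_smul, transpose_mul, Matrix.smul_mul, Matrix.mul_smul, smul_smul, ← sq]
    simpa only [Matrix.mul_assoc] using hid
  exact ⟨hid, hnorm, spec_le_one_of_spec_two_smul_sub_one_le _ hnorm⟩

/-- `(2J⁻¹ - I)ᵀ(2J⁻¹ - I) + τ² J⁻ᵀ Wᵀ W J⁻¹ = I`, hence `‖2J⁻¹ - I‖₂ ≤ 1` and
`‖J⁻¹‖₂ ≤ 1`. -/
theorem stmt_11 (n p : ℕ) (X E : Matrix (Fin n) (Fin p) ℝ)
    (hX : Xᵀ * X = 1) (hskew : (Xᵀ * E)ᵀ = -(Xᵀ * E))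
    (W : Matrix (Fin n) (Fin p) ℝ) (hW : W = -((1 - X * Xᵀ) * E))
    (τ : ℝ) (hτ : 0 ≤ τ)
    (J : Matrix (Fin p) (Fin p) ℝ)
    (hJ : J = 1 + (τ ^ 2 / 4) • (Wᵀ * W) + (τ / 2) • (Xᵀ * E)) :
    ((2 : ℝ) • J⁻¹ - 1)ᵀ * ((2 : ℝ) • J⁻¹ - 1) + (τ ^ 2) • ((J⁻¹)ᵀ * (Wᵀ * W) * J⁻¹) = 1 ∧
      spec ((2 : ℝ) • J⁻¹ - 1) ≤ 1 ∧ spec J⁻¹ ≤ 1 :=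
  stmt_11_general n p X E hskew W τ J hJ
end

section
/- Let $X \in \mathbb{R}^{n\times p}$ (not necessarily feasible) with $\Xi_X = X^T X - I_p$, let $E \in \mathbb{R}^{n\times p}$ with $X^T E$ skew-symmetric, $\widehat{W} = -(I_n - X(X^T X)^{-1}X^T)E$ (assume $X^T X$ invertible), $J = I_p + \frac{\tau^2}{4}\widehat{W}^T \widehat{W} + \frac{\tau}{2}X^T E$, and $\widehat{Y} = X(2J^{-1} - I_p) + \tau\widehat{W}J^{-1}$. Then $\widehat{Y}^T\widehat{Y} - I_p = (2J^{-1} - I_p)^T \Xi_X (2J^{-1} - I_p)$, and hence $\|\widehat{Y}^T\widehat{Y} - I_p\|_F \leq \|\Xi_X\|_F$. -/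
/-!
Write `K = 2J⁻¹ - I`. Since `XᵀŴ = 0`, the Gram matrix of `Ŷ = XK + Ŵ(τJ⁻¹)` has no cross
terms: `ŶᵀŶ = Kᵀ(XᵀX)K + τ² J⁻ᵀŴᵀŴJ⁻¹`. As `XᵀE` is skew, the symmetric part of `J` is
`I + (τ²/4) ŴᵀŴ`, and this turns the second term into exactly `I - KᵀK`, which gives the identity.
The same fact makes `J - I` positive semidefinite as a quadratic form, so the Cayley transform `K`
(and likewise `Kᵀ`) is a contraction, and multiplying by contractions cannot increase the Frobenius
norm.
-/

open Matrix

section Gram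

variable {k l m n R : Type*} [Fintype k] [Fintype m] [Fintype n] [CommRing R]

theorem transpose_mul_one_sub_proj_mul_eq_zero [DecidableEq m] [DecidableEq n]
    (X : Matrix m n R) (E : Matrix m l R) (hX : IsUnit (Xᵀ * X)) :
    Xᵀ * ((1 - X * (Xᵀ * X)⁻¹ * Xᵀ) * E) = 0 := by
  have hinv : Xᵀ * X * (Xᵀ * X)⁻¹ = 1 := mul_nonsing_inv _ ((isUnit_iff_isUnit_det _).mp hX)
  rw [← Matrix.mul_assoc, Matrix.mul_sub, Matrix.mul_one, ← Matrix.mul_assoc, ← Matrix.mul_assoc,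
    hinv, Matrix.one_mul, sub_self, Matrix.zero_mul]

theorem transpose_mul_self_add_of_transpose_mul_eq_zero {X : Matrix m n R} {W : Matrix m k R}
    (h : Xᵀ * W = 0) (A : Matrix n l R) (B : Matrix k l R) :
    (X * A + W * B)ᵀ * (X * A + W * B) = Aᵀ * (Xᵀ * X) * A + Bᵀ * (Wᵀ * W) * B := by
  have h' : Wᵀ * X = 0 := by
    rw [← transpose_transpose (Wᵀ * X), transpose_mul, transpose_transpose, h, transpose_zero]
  simp only [transpose_add, transpose_mul, Matrix.add_mul, Matrix.mul_add, Matrix.mul_assoc]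
  simp only [← Matrix.mul_assoc Xᵀ W, ← Matrix.mul_assoc Wᵀ X, h, h', Matrix.zero_mul,
    Matrix.mul_zero, add_zero, zero_add]

end Gram

section Cayley

variable {n R : Type*} [Fintype n] [DecidableEq n]

theorem cayley_transpose_mul_self [CommRing R] {J : Matrix n n R} (hJ : IsUnit J.det) :
    ((2 : R) • J⁻¹ - 1)ᵀ * ((2 : R) • J⁻¹ - 1) =
      1 - J⁻¹ᵀ * ((2 : R) • (J + Jᵀ - 2)) * J⁻¹ := by
  have hinvT : J⁻¹ᵀ * Jᵀ = 1 := by rw [← transpose_mul, mul_nonsing_inv J hJ, transpose_one]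
  have hinv : J * J⁻¹ = 1 := mul_nonsing_inv J hJ
  simp only [transpose_sub, transpose_smul, transpose_one, Matrix.sub_mul, Matrix.mul_sub,
    Matrix.add_mul, Matrix.mul_add, Matrix.smul_mul, Matrix.mul_smul, Matrix.mul_one,
    Matrix.one_mul, Matrix.mul_assoc, hinv]
  rw [← Matrix.mul_assoc J⁻¹ᵀ Jᵀ, hinvT, Matrix.one_mul, two_mul, Matrix.mul_add]
  module

theorem cayley_update_gram_sub_one [CommRing R] {m : Type*} [Fintype m] {X W : Matrix m n R}
    {J : Matrix n n R} (hXW : Xᵀ * W = 0) (hJ : IsUnit J.det) (τ : R)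
    (hsym : (2 : R) • (J + Jᵀ - 2) = τ ^ 2 • (Wᵀ * W)) :
    (X * ((2 : R) • J⁻¹ - 1) + τ • (W * J⁻¹))ᵀ * (X * ((2 : R) • J⁻¹ - 1) + τ • (W * J⁻¹)) - 1 =
      ((2 : R) • J⁻¹ - 1)ᵀ * (Xᵀ * X - 1) * ((2 : R) • J⁻¹ - 1) := by
  have hW : (τ • J⁻¹)ᵀ * (Wᵀ * W) * (τ • J⁻¹) =
      1 - ((2 : R) • J⁻¹ - 1)ᵀ * ((2 : R) • J⁻¹ - 1) := by
    rw [cayley_transpose_mul_self hJ, hsym, sub_sub_cancel]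
    simp only [transpose_smul, Matrix.smul_mul, Matrix.mul_smul, smul_smul, sq]
  rw [← Matrix.mul_smul, transpose_mul_self_add_of_transpose_mul_eq_zero hXW, hW,
    Matrix.mul_sub _ (Xᵀ * X), Matrix.sub_mul, Matrix.mul_one]
  abel

variable [Field R] [LinearOrder R] [IsStrictOrderedRing R] {J : Matrix n n R}

theorem le_dotProduct_mulVec_of_two_smul_add_transpose {m : Type*} [Fintype m] (τ : R)
    {W : Matrix m n R} (h : (2 : R) • (J + Jᵀ - 2) = τ ^ 2 • (Wᵀ * W)) (u : n → R) :
    u ⬝ᵥ u ≤ u ⬝ᵥ (J *ᵥ u) := by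
  have hquad := congrArg (fun M => u ⬝ᵥ (M *ᵥ u)) h
  simp only [smul_mulVec, sub_mulVec, add_mulVec, ofNat_mulVec, ← mulVec_mulVec, dotProduct_smul,
    dotProduct_sub, dotProduct_add, dotProduct_transpose_mulVec, dotProduct_mulVec u Wᵀ,
    vecMul_transpose, smul_eq_mul] at hquad
  have hWu : 0 ≤ (W *ᵥ u) ⬝ᵥ (W *ᵥ u) := Finset.sum_nonneg fun i _ => mul_self_nonneg _
  nlinarith [sq_nonneg τ]

theorem isUnit_of_le_dotProduct_mulVec (hJ : ∀ u, u ⬝ᵥ u ≤ u ⬝ᵥ (J *ᵥ u)) : IsUnit J := by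
  rw [← mulVec_injective_iff_isUnit]
  intro a b hab
  have h := hJ (a - b)
  rw [mulVec_sub, hab, sub_self, dotProduct_zero] at h
  exact sub_eq_zero.mp (dotProduct_self_eq_zero.mp
    (le_antisymm h (Finset.sum_nonneg fun i _ => mul_self_nonneg _)))

theorem cayley_mulVec_dotProduct_le (hJ : ∀ u, u ⬝ᵥ u ≤ u ⬝ᵥ (J *ᵥ u)) (v : n → R) :
    ((2 : R) • J⁻¹ - 1) *ᵥ v ⬝ᵥ ((2 : R) • J⁻¹ - 1) *ᵥ v ≤ v ⬝ᵥ v := by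
  have hdet := (isUnit_iff_isUnit_det J).mp (isUnit_of_le_dotProduct_mulVec hJ)
  obtain ⟨u, rfl⟩ : ∃ u, J *ᵥ u = v :=
    ⟨J⁻¹ *ᵥ v, by rw [mulVec_mulVec, mul_nonsing_inv J hdet, one_mulVec]⟩
  rw [sub_mulVec, smul_mulVec, one_mulVec, mulVec_mulVec, nonsing_inv_mul J hdet, one_mulVec]
  have := hJ u
  simp only [sub_dotProduct, dotProduct_sub, smul_dotProduct, dotProduct_smul, smul_eq_mul,
    dotProduct_comm (J *ᵥ u) u]
  nlinarith

end Cayley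

section Frobenius

variable {m n : ℕ}

theorem trace_transpose_mul_self_eq_sum (A : Matrix (Fin m) (Fin n) ℝ) :
    trace (Aᵀ * A) = ∑ j, Aᵀ j ⬝ᵥ Aᵀ j :=
  rfl

theorem frob_transpose (A : Matrix (Fin m) (Fin n) ℝ) : frob Aᵀ = frob A := by
  rw [frob, frob, transpose_transpose, trace_mul_comm]

theorem frob_mul_le_of_mulVec_dotProduct_le {K : Matrix (Fin m) (Fin m) ℝ}
    (hK : ∀ v, K *ᵥ v ⬝ᵥ K *ᵥ v ≤ v ⬝ᵥ v) (B : Matrix (Fin m) (Fin n) ℝ) :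
    frob (K * B) ≤ frob B := by
  refine Real.sqrt_le_sqrt ?_
  rw [trace_transpose_mul_self_eq_sum, trace_transpose_mul_self_eq_sum]
  exact Finset.sum_le_sum fun j _ => hK (Bᵀ j)

theorem frob_transpose_mul_mul_le {K : Matrix (Fin m) (Fin m) ℝ}
    (hK : ∀ v, Kᵀ *ᵥ v ⬝ᵥ Kᵀ *ᵥ v ≤ v ⬝ᵥ v) (A : Matrix (Fin m) (Fin m) ℝ) :
    frob (Kᵀ * A * K) ≤ frob A :=
  calc frob (Kᵀ * A * K) ≤ frob (A * K) := by
        rw [Matrix.mul_assoc]; exact frob_mul_le_of_mulVec_dotProduct_le hK _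
    _ = frob (Kᵀ * Aᵀ) := by rw [← frob_transpose, transpose_mul]
    _ ≤ frob A := (frob_mul_le_of_mulVec_dotProduct_le hK _).trans_eq (frob_transpose A)

end Frobenius

theorem stmt_12_general (n p : ℕ) (X E : Matrix (Fin n) (Fin p) ℝ)
    (hXu : IsUnit (Xᵀ * X))
    (Ξ : Matrix (Fin p) (Fin p) ℝ) (hΞ : Ξ = Xᵀ * X - 1)
    (hskew : (Xᵀ * E)ᵀ = -(Xᵀ * E))
    (W : Matrix (Fin n) (Fin p) ℝ) (hW : W = -((1 - X * (Xᵀ * X)⁻¹ * Xᵀ) * E))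
    (τ : ℝ)
    (J : Matrix (Fin p) (Fin p) ℝ)
    (hJ : J = 1 + (τ ^ 2 / 4) • (Wᵀ * W) + (τ / 2) • (Xᵀ * E))
    (Y : Matrix (Fin n) (Fin p) ℝ)
    (hY : Y = X * ((2 : ℝ) • J⁻¹ - 1) + τ • (W * J⁻¹)) :
    Yᵀ * Y - 1 = ((2 : ℝ) • J⁻¹ - 1)ᵀ * Ξ * ((2 : ℝ) • J⁻¹ - 1) ∧
      frob (Yᵀ * Y - 1) ≤ frob Ξ := by
  have hXW : Xᵀ * W = 0 := by
    rw [hW, Matrix.mul_neg, transpose_mul_one_sub_proj_mul_eq_zero X E hXu, neg_zero]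
  have hsym : (2 : ℝ) • (J + Jᵀ - 2) = τ ^ 2 • (Wᵀ * W) := by
    rw [hJ, transpose_add, transpose_add, transpose_smul, transpose_smul, hskew, transpose_mul Wᵀ,
      transpose_transpose, transpose_one, smul_neg,
      show (2 : Matrix (Fin p) (Fin p) ℝ) = 1 + 1 from one_add_one_eq_two.symm]
    module
  have hcoer := le_dotProduct_mulVec_of_two_smul_add_transpose τ hsym
  have hJdet := (isUnit_iff_isUnit_det J).mp (isUnit_of_le_dotProduct_mulVec hcoer)
  have hid : Yᵀ * Y - 1 = ((2 : ℝ) • J⁻¹ - 1)ᵀ * Ξ * ((2 : ℝ) • J⁻¹ - 1) := by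
    rw [hY, hΞ]
    exact cayley_update_gram_sub_one hXW hJdet τ hsym
  refine ⟨hid, hid ▸ frob_transpose_mul_mul_le ?_ Ξ⟩
  rw [transpose_sub, transpose_smul, transpose_one, transpose_nonsing_inv]
  exact cayley_mulVec_dotProduct_le fun u =>
    (hcoer u).trans_eq (dotProduct_transpose_mulVec J u u).symm

/-- With the exact oblique projector `Ŵ = -(I - X(XᵀX)⁻¹Xᵀ)E`, the update does not
amplify the feasibility error: `ŶᵀŶ - I = (2J⁻¹-I)ᵀ Ξ_X (2J⁻¹-I)` and
`‖ŶᵀŶ - I‖_F ≤ ‖Ξ_X‖_F`. -/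
theorem stmt_12 (n p : ℕ) (X E : Matrix (Fin n) (Fin p) ℝ)
    (hXu : IsUnit (Xᵀ * X))
    (Ξ : Matrix (Fin p) (Fin p) ℝ) (hΞ : Ξ = Xᵀ * X - 1)
    (hskew : (Xᵀ * E)ᵀ = -(Xᵀ * E))
    (W : Matrix (Fin n) (Fin p) ℝ) (hW : W = -((1 - X * (Xᵀ * X)⁻¹ * Xᵀ) * E))
    (τ : ℝ) (hτ : 0 ≤ τ)
    (J : Matrix (Fin p) (Fin p) ℝ)
    (hJ : J = 1 + (τ ^ 2 / 4) • (Wᵀ * W) + (τ / 2) • (Xᵀ * E))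
    (Y : Matrix (Fin n) (Fin p) ℝ)
    (hY : Y = X * ((2 : ℝ) • J⁻¹ - 1) + τ • (W * J⁻¹)) :
    Yᵀ * Y - 1 = ((2 : ℝ) • J⁻¹ - 1)ᵀ * Ξ * ((2 : ℝ) • J⁻¹ - 1) ∧
      frob (Yᵀ * Y - 1) ≤ frob Ξ :=
  stmt_12_general n p X E hXu Ξ hΞ hskew W hW τ J hJ Y hY
end

section
/- Let $X \in \mathbb{C}^{n\times p}$, $H \in \mathbb{R}^{n\times n}$ symmetric positive semidefinite, $K \in \mathbb{R}^{p\times p}$ symmetric positive definite with $X^* H X = K$, and $G \in \mathbb{C}^{n\times p}$. Define $D = GX^*H^2X - HXG^*HX$ and $\nabla\mathcal{F} = G - HXG^*XK^{-1}$. Then $\nabla\mathcal{F} = 0$ if and only if $D = 0$. -/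
open Matrix
open scoped ComplexOrder

/-- A complex matrix with `trace (Mᴴ * M) = 0` is zero. -/
lemma aux_trace_zero {m n : Type*} [Fintype m] [Fintype n] (M : Matrix m n ℂ)
    (h : (Mᴴ * M).trace = 0) : M = 0 := by
  have h2 : ∑ j, ∑ i, Complex.normSq (M i j) = 0 := by
    have key : (Mᴴ * M).trace = ((∑ j, ∑ i, Complex.normSq (M i j) : ℝ) : ℂ) := by
      simp only [Matrix.trace, Matrix.diag, Matrix.mul_apply, Matrix.conjTranspose_apply,
        Complex.star_def, ← Complex.normSq_eq_conj_mul_self]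
      push_cast
      rfl
    rw [key] at h
    exact_mod_cast h
  ext i j
  have h3 : ∀ j' ∈ Finset.univ, (0:ℝ) ≤ ∑ i, Complex.normSq (M i j') := fun j' _ =>
    Finset.sum_nonneg fun i _ => Complex.normSq_nonneg _
  have h4 := (Finset.sum_eq_zero_iff_of_nonneg h3).mp h2 j (Finset.mem_univ j)
  have h5 := (Finset.sum_eq_zero_iff_of_nonneg
    (fun i' _ => Complex.normSq_nonneg (M i' j))).mp h4 i (Finset.mem_univ i)
  simpa using Complex.normSq_eq_zero.mp h5

/-- First-order optimality on the generalized Stiefel manifold `{X : X*HX = K}`: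
`∇F = G - HXG*XK⁻¹ = 0` iff `D = GX*H²X - HXG*HX = 0`. -/
theorem stmt_13 (n p : ℕ) (X G : Matrix (Fin n) (Fin p) ℂ)
    (H : Matrix (Fin n) (Fin n) ℂ) (hH : H.PosSemidef) (hHre : ∀ i j, (H i j).im = 0)
    (K : Matrix (Fin p) (Fin p) ℂ) (hK : K.PosDef) (hKre : ∀ i j, (K i j).im = 0)
    (hXK : Xᴴ * H * X = K)
    (D : Matrix (Fin n) (Fin p) ℂ)
    (hD : D = G * Xᴴ * (H * H) * X - H * X * Gᴴ * H * X)
    (nF : Matrix (Fin n) (Fin p) ℂ)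
    (hnF : nF = G - H * X * Gᴴ * X * K⁻¹) :
    nF = 0 ↔ D = 0 := by
  have hHH : Hᴴ = H := hH.isHermitian
  have hKH : Kᴴ = K := hK.isHermitian
  have hKdet : IsUnit K.det := hK.det_pos.ne'.isUnit
  have hKinv : K⁻¹ * K = 1 := Matrix.nonsing_inv_mul K hKdet
  have hKinv' : K * K⁻¹ = 1 := Matrix.mul_nonsing_inv K hKdet
  have hXK' : Xᴴ * (H * X) = K := by rw [← Matrix.mul_assoc]; exact hXK
  have hXHX : ∀ A : Matrix (Fin p) (Fin p) ℂ, Xᴴ * (H * (X * A)) = K * A := fun A => by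
    conv_rhs => rw [← hXK']
    simp only [Matrix.mul_assoc]
  have hKK1 : ∀ A : Matrix (Fin p) (Fin p) ℂ, K⁻¹ * (K * A) = A := fun A => by
    rw [← Matrix.mul_assoc, hKinv, Matrix.one_mul]
  have hKK2 : ∀ A : Matrix (Fin p) (Fin p) ℂ, K * (K⁻¹ * A) = A := fun A => by
    rw [← Matrix.mul_assoc, hKinv', Matrix.one_mul]
  obtain ⟨M, hM⟩ : ∃ M : Matrix (Fin n) (Fin n) ℂ,
      M = G * (Xᴴ * H) - H * X * Gᴴ := ⟨_, rfl⟩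
  have hMH : Mᴴ = -M := by
    rw [hM, Matrix.conjTranspose_sub, neg_sub]
    congr 1
    · simp only [Matrix.conjTranspose_mul, Matrix.conjTranspose_conjTranspose, hHH,
        Matrix.mul_assoc]
    · simp only [Matrix.conjTranspose_mul, Matrix.conjTranspose_conjTranspose, hHH,
        Matrix.mul_assoc]
  have hDM : D = M * (H * X) := by
    rw [hD, hM, Matrix.sub_mul]
    simp only [Matrix.mul_assoc]
  have hnFK : nF * K = M * X := by
    rw [hnF, hM, Matrix.sub_mul, Matrix.sub_mul]
    simp only [Matrix.mul_assoc, hKinv, Matrix.mul_one, hXK']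
  constructor
  · -- nF = 0 → D = 0
    intro h0
    have hG : G = H * X * Gᴴ * X * K⁻¹ := sub_eq_zero.mp (h0 ▸ hnF).symm
    have hGH : Gᴴ = K⁻¹ * (Xᴴ * (G * (Xᴴ * H))) := by
      conv_lhs => rw [hG]
      simp only [Matrix.conjTranspose_mul, Matrix.conjTranspose_conjTranspose,
        Matrix.conjTranspose_nonsing_inv, hKH, hHH, Matrix.mul_assoc]
    have key : G * (Xᴴ * (H * (H * X))) = H * (X * (Gᴴ * (H * X))) := by
      conv_lhs => rw [hG]
      conv_rhs => rw [hGH]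
      simp only [Matrix.mul_assoc]
      conv_lhs => rw [hGH]
      simp only [Matrix.mul_assoc]
      rw [hXHX, hKK2]
    rw [hDM, hM, Matrix.sub_mul]
    simp only [Matrix.mul_assoc]
    rw [key, sub_self]
  · -- D = 0 → nF = 0
    intro hD0
    have hXHM : Xᴴ * (H * M) = -Dᴴ := by
      rw [hDM, Matrix.conjTranspose_mul, Matrix.conjTranspose_mul, hMH, hHH,
        Matrix.mul_neg, neg_neg, Matrix.mul_assoc]
    have htr : (Mᴴ * M).trace = (Dᴴ * G).trace + (Gᴴ * D).trace := by
      have e0 : Mᴴ * M = -(M * M) := by rw [hMH, Matrix.neg_mul]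
      have e1 : M * M = M * (G * (Xᴴ * H)) - M * (H * X * Gᴴ) := by
        rw [← Matrix.mul_sub, ← hM]
      have t1 : (M * (G * (Xᴴ * H))).trace = -(Dᴴ * G).trace := by
        rw [← Matrix.mul_assoc, Matrix.trace_mul_cycle, Matrix.mul_assoc Xᴴ H M, hXHM,
          Matrix.neg_mul, Matrix.trace_neg]
      have t2 : (M * (H * X * Gᴴ)).trace = (Gᴴ * D).trace := by
        rw [show M * (H * X * Gᴴ) = M * (H * X) * Gᴴ from by simp only [Matrix.mul_assoc],
          ← hDM, Matrix.trace_mul_comm]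
      rw [e0, Matrix.trace_neg, e1, Matrix.trace_sub, t1, t2]
      ring
    rw [hD0] at htr
    simp only [Matrix.conjTranspose_zero, Matrix.zero_mul, Matrix.mul_zero,
      Matrix.trace_zero, add_zero] at htr
    have hM0 : M = 0 := aux_trace_zero M htr
    have hnFK0 : nF * K = 0 := by rw [hnFK, hM0, Matrix.zero_mul]
    calc nF = nF * (K * K⁻¹) := by rw [hKinv', Matrix.mul_one]
      _ = nF * K * K⁻¹ := by rw [Matrix.mul_assoc]
      _ = 0 := by rw [hnFK0, Matrix.zero_mul]
end

section
/- Let $X \in \mathbb{C}^{n\times p}$ with $X^*HX = K$ where $H \succeq 0$ symmetric and $K \succ 0$ symmetric, and let $G \in \mathbb{C}^{n\times p}$. With $D = GX^*H^2X - HXG^*HX$, one has $\langle G, D\rangle = \frac{1}{2}\|GX^*H - HXG^*\|_F^2 \geq \frac{1}{2}\|XK^{-1}\|_2^{-2}\|\nabla\mathcal{F}\|_F^2$, where $\nabla\mathcal{F} = G - HXG^*XK^{-1}$ and $\langle A,B\rangle = \mathrm{Re}\,\mathrm{tr}(A^*B)$. -/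
/-!
Put `P = G X*H`, so that `P* = HXG*` and `A = P - P*` is skew-Hermitian. Then `D = A HX`, and
cycling the trace gives `⟨G, D⟩ = Re tr(P* A) = ½ ‖A‖_F²`. Since `X*HX = K`, `P XK⁻¹ = G`, hence
`∇F = A XK⁻¹` and `‖∇F‖_F ≤ ‖A‖_F ‖XK⁻¹‖₂`.
-/

open Matrix
open scoped ComplexOrder

/-- Frobenius norm of a complex matrix. -/
noncomputable def frobC {n p : ℕ} (A : Matrix (Fin n) (Fin p) ℂ) : ℝ :=
  Real.sqrt (Matrix.trace (Aᴴ * A)).re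

/-- Spectral norm of a (rectangular) complex matrix. -/
noncomputable def specC {n p : ℕ} (A : Matrix (Fin n) (Fin p) ℂ) : ℝ :=
  ‖LinearMap.toContinuousLinearMap (Matrix.toEuclideanLin A)‖

section

variable {𝕜 : Type*} [RCLike 𝕜] {l m n : Type*} [Fintype l] [Fintype m] [Fintype n]

lemma re_trace_conjTranspose_mul_self (A : Matrix m n 𝕜) :
    RCLike.re (trace (Aᴴ * A)) = ∑ i, ∑ j, ‖A i j‖ ^ 2 := by
  simp only [trace, diag, mul_apply, conjTranspose_apply, map_sum, RCLike.star_def,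
    RCLike.conj_mul, ← RCLike.ofReal_pow, RCLike.ofReal_re]
  exact Finset.sum_comm

lemma re_trace_conjTranspose_mul_sub_conjTranspose (P : Matrix n n 𝕜) :
    RCLike.re (trace (Pᴴ * (P - Pᴴ))) = RCLike.re (trace ((P - Pᴴ)ᴴ * (P - Pᴴ))) / 2 := by
  have hPP : RCLike.re (trace (Pᴴ * Pᴴ)) = RCLike.re (trace (P * P)) := by
    rw [← conjTranspose_mul, trace_conjTranspose, RCLike.star_def, RCLike.conj_re]
  have hPPH : trace (P * Pᴴ) = trace (Pᴴ * P) := trace_mul_comm _ _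
  simp only [conjTranspose_sub, conjTranspose_conjTranspose, mul_sub, sub_mul, trace_sub,
    map_sub, hPP, hPPH]
  ring

open scoped Matrix.Norms.L2Operator

lemma l2_opNorm_vecMul [DecidableEq n] (M : Matrix m n 𝕜) (v : m → 𝕜) :
    ‖WithLp.toLp 2 (v ᵥ* M)‖ ≤ ‖M‖ * ‖WithLp.toLp 2 v‖ := by
  classical
  calc ‖WithLp.toLp 2 (v ᵥ* M)‖
      = ‖WithLp.toLp 2 (Mᴴ *ᵥ star v)‖ := by
        rw [← star_vecMul]; simp [EuclideanSpace.norm_eq]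
    _ ≤ ‖Mᴴ‖ * ‖WithLp.toLp 2 (star v)‖ := l2_opNorm_mulVec Mᴴ (WithLp.toLp 2 (star v))
    _ = ‖M‖ * ‖WithLp.toLp 2 v‖ := by
        rw [l2_opNorm_conjTranspose]; simp [EuclideanSpace.norm_eq]

lemma sum_norm_sq_mul_le [DecidableEq n] (A : Matrix l m 𝕜) (M : Matrix m n 𝕜) :
    ∑ i, ∑ j, ‖(A * M) i j‖ ^ 2 ≤ ‖M‖ ^ 2 * ∑ i, ∑ j, ‖A i j‖ ^ 2 := by
  rw [Finset.mul_sum]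
  gcongr with i
  have h := pow_le_pow_left₀ (norm_nonneg _) (l2_opNorm_vecMul M (A i)) 2
  rwa [EuclideanSpace.norm_sq_eq, mul_pow, EuclideanSpace.norm_sq_eq] at h

end

lemma frobC_sq {n p : ℕ} (A : Matrix (Fin n) (Fin p) ℂ) :
    frobC A ^ 2 = (trace (Aᴴ * A)).re := by
  have h := re_trace_conjTranspose_mul_self A
  rw [RCLike.re_to_complex] at h
  rw [frobC, Real.sq_sqrt (h ▸ by positivity)]

lemma frobC_mul_sq_le {n m p : ℕ} (A : Matrix (Fin n) (Fin m) ℂ) (M : Matrix (Fin m) (Fin p) ℂ) :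
    frobC (A * M) ^ 2 ≤ specC M ^ 2 * frobC A ^ 2 := by
  simp only [frobC_sq, ← RCLike.re_to_complex, re_trace_conjTranspose_mul_self]
  exact sum_norm_sq_mul_le A M

theorem stmt_14_general (n p : ℕ) (X G : Matrix (Fin n) (Fin p) ℂ)
    (H : Matrix (Fin n) (Fin n) ℂ) (hH : H.PosSemidef)
    (K : Matrix (Fin p) (Fin p) ℂ) (hK : K.PosDef)
    (hXK : Xᴴ * H * X = K)
    (D : Matrix (Fin n) (Fin p) ℂ)
    (hD : D = G * Xᴴ * (H * H) * X - H * X * Gᴴ * H * X)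
    (nF : Matrix (Fin n) (Fin p) ℂ)
    (hnF : nF = G - H * X * Gᴴ * X * K⁻¹) :
    (Matrix.trace (Gᴴ * D)).re = (1 / 2) * frobC (G * Xᴴ * H - H * X * Gᴴ) ^ 2 ∧
      (1 / 2) * (specC (X * K⁻¹) ^ 2)⁻¹ * frobC nF ^ 2 ≤ (Matrix.trace (Gᴴ * D)).re := by
  set P := G * Xᴴ * H
  have hPH : Pᴴ = H * X * Gᴴ := by
    simp only [P, conjTranspose_mul, conjTranspose_conjTranspose, hH.1.eq, Matrix.mul_assoc]
  have hD' : D = (P - Pᴴ) * (H * X) := by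
    rw [hD, hPH, Matrix.sub_mul]; simp only [P, Matrix.mul_assoc]
  have hG : P * (X * K⁻¹) = G := by
    rw [← Matrix.mul_one G, ← mul_nonsing_inv K hK.det_pos.ne'.isUnit, ← hXK]
    simp only [P, Matrix.mul_assoc]
  have hnF' : nF = (P - Pᴴ) * (X * K⁻¹) := by
    rw [hnF, Matrix.sub_mul, hG, hPH]; simp only [Matrix.mul_assoc]
  have hdescent : (trace (Gᴴ * D)).re = 1 / 2 * frobC (P - Pᴴ) ^ 2 := by
    have h := re_trace_conjTranspose_mul_sub_conjTranspose P
    simp only [RCLike.re_to_complex] at h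
    rw [hD', trace_mul_comm, Matrix.mul_assoc, trace_mul_comm, ← hPH, h, frobC_sq]
    ring
  rw [← hPH, hdescent, hnF']
  refine ⟨rfl, ?_⟩
  rw [mul_assoc]
  gcongr
  exact inv_mul_le_of_le_mul₀ (by positivity) (by positivity) (frobC_mul_sq_le _ _)

/-- `⟨G, D⟩ = ½‖GX*H - HXG*‖_F² ≥ ½‖XK⁻¹‖₂⁻² ‖∇F‖_F²`: descent on the generalized
Stiefel manifold, with `⟨A,B⟩ = Re tr(A*B)`. -/
theorem stmt_14 (n p : ℕ) (X G : Matrix (Fin n) (Fin p) ℂ)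
    (H : Matrix (Fin n) (Fin n) ℂ) (hH : H.PosSemidef) (hHre : ∀ i j, (H i j).im = 0)
    (K : Matrix (Fin p) (Fin p) ℂ) (hK : K.PosDef) (hKre : ∀ i j, (K i j).im = 0)
    (hXK : Xᴴ * H * X = K)
    (D : Matrix (Fin n) (Fin p) ℂ)
    (hD : D = G * Xᴴ * (H * H) * X - H * X * Gᴴ * H * X)
    (nF : Matrix (Fin n) (Fin p) ℂ)
    (hnF : nF = G - H * X * Gᴴ * X * K⁻¹) :
    (Matrix.trace (Gᴴ * D)).re = (1 / 2) * frobC (G * Xᴴ * H - H * X * Gᴴ) ^ 2 ∧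
      (1 / 2) * (specC (X * K⁻¹) ^ 2)⁻¹ * frobC nF ^ 2 ≤ (Matrix.trace (Gᴴ * D)).re :=
  stmt_14_general n p X G H hH K hK hXK D hD nF hnF
end

section
/- Let $X \in \mathbb{C}^{n\times p}$ with $X^*HX = K$ ($H \succeq 0$ symmetric, $K \succ 0$ symmetric), $D \in \mathbb{C}^{n\times p}$ with $X^*HD$ skew-Hermitian. Set $W = -(I_n - XK^{-1}X^*H)D$ and $J(\tau) = K + \frac{\tau^2}{4}W^*HW + \frac{\tau}{2}X^*HD$. Then $J(\tau)$ is invertible and $Y(\tau) = (2X + \tau W)J(\tau)^{-1}K - X$ satisfies $Y(\tau)^*HY(\tau) = K$. -/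
open Matrix
open scoped ComplexOrder

/-!
Since `X K⁻¹ Xᴴ H` is the `H`-orthogonal projection onto the range of `X`, the direction `W` is
`H`-orthogonal to `X`. Hence the skew-Hermitian part of `J` cancels in `J + Jᴴ = 2 (K + τ²/4 WᴴHW)`,
which is positive definite, so `J` is invertible. With `M = 2X + τW` one has
`MᴴHM = 4K + τ² WᴴHW = 2 (J + Jᴴ)` and `MᴴHX = XᴴHM = 2K`, and expanding `YᴴHY` for
`Y = M J⁻¹ K - X` the terms `2 K Jᴴ⁻¹ K` and `2 K J⁻¹ K` cancel, leaving `XᴴHX = K`.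
-/

namespace Matrix

variable {m n R : Type*} [Fintype m] [Fintype n] [DecidableEq m]

theorem isUnit_of_posDef_add_conjTranspose {K : Type*} [Field K] [PartialOrder K] [StarRing K]
    {J : Matrix m m K} (hJ : (J + Jᴴ).PosDef) : IsUnit J := by
  by_contra h
  obtain ⟨a, ha, hJa⟩ : ∃ a ≠ 0, J *ᵥ a = 0 := by
    obtain ⟨a, b, hab⟩ := Function.not_injective_iff.mp <| mulVec_injective_iff_isUnit.not.mpr h
    exact ⟨a - b, by simp [sub_eq_zero, hab, mulVec_sub]⟩
  have hJa' : star a ᵥ* Jᴴ = 0 := by rw [← star_mulVec, hJa, star_zero]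
  simpa [add_mulVec, dotProduct_mulVec, hJa, hJa'] using hJ.dotProduct_mulVec_pos ha

variable [CommRing R] [StarRing R]

theorem conjTranspose_mul_mul_sub_proj_mul_eq_zero [DecidableEq n] {H : Matrix n n R}
    {X : Matrix n m R} {K : Matrix m m R} (hK : IsUnit K) (hX : Xᴴ * H * X = K) (D : Matrix n m R) :
    Xᴴ * H * ((1 - X * K⁻¹ * Xᴴ * H) * D) = 0 := by
  have hKK : K * K⁻¹ = 1 := mul_nonsing_inv K ((isUnit_iff_isUnit_det K).mp hK)
  calc Xᴴ * H * ((1 - X * K⁻¹ * Xᴴ * H) * D)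
      = Xᴴ * H * D - (Xᴴ * H * X) * K⁻¹ * (Xᴴ * H * D) := by
        simp only [Matrix.sub_mul, Matrix.one_mul, Matrix.mul_sub, Matrix.mul_assoc]
    _ = 0 := by rw [hX, hKK, Matrix.one_mul, sub_self]

theorem conjTranspose_mul_mul_cayley_update {H : Matrix n n R} {X M : Matrix n m R}
    {J K : Matrix m m R} (hJ : IsUnit J) (hK : Kᴴ = K) (hX : Xᴴ * H * X = K)
    (hMX : Mᴴ * H * X = (2 : R) • K) (hXM : Xᴴ * H * M = (2 : R) • K)
    (hM : Mᴴ * H * M = (2 : R) • (J + Jᴴ)) :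
    (M * J⁻¹ * K - X)ᴴ * H * (M * J⁻¹ * K - X) = K := by
  have hJJ : J * J⁻¹ = 1 := mul_nonsing_inv J ((isUnit_iff_isUnit_det J).mp hJ)
  have hJJ' : Jᴴ⁻¹ * Jᴴ = 1 := nonsing_inv_mul _ ((isUnit_iff_isUnit_det _).mp hJ.star)
  calc (M * J⁻¹ * K - X)ᴴ * H * (M * J⁻¹ * K - X)
      = K * Jᴴ⁻¹ * (Mᴴ * H * M) * J⁻¹ * K - K * Jᴴ⁻¹ * (Mᴴ * H * X)
          - (Xᴴ * H * M) * J⁻¹ * K + Xᴴ * H * X := by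
        simp only [conjTranspose_sub, conjTranspose_mul, conjTranspose_nonsing_inv, hK,
          Matrix.sub_mul, Matrix.mul_sub, Matrix.mul_assoc]
        abel
    _ = K := by
        rw [hM, hMX, hXM, hX]
        have hmid : Jᴴ⁻¹ * (J + Jᴴ) * J⁻¹ = Jᴴ⁻¹ + J⁻¹ := by
          rw [Matrix.mul_add, Matrix.add_mul, hJJ', Matrix.one_mul,
            Matrix.mul_assoc, hJJ, Matrix.mul_one]
        have hquad : K * Jᴴ⁻¹ * ((2 : R) • (J + Jᴴ)) * J⁻¹ * K
            = (2 : R) • (K * Jᴴ⁻¹ * K) + (2 : R) • (K * J⁻¹ * K) := by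
          rw [Matrix.mul_smul, Matrix.smul_mul, Matrix.smul_mul, Matrix.mul_assoc K,
            Matrix.mul_assoc K, hmid]
          simp only [Matrix.mul_add, Matrix.add_mul, smul_add, Matrix.mul_assoc]
        rw [hquad]
        simp only [Matrix.mul_smul, Matrix.smul_mul, Matrix.mul_assoc]
        abel

end Matrix

theorem stmt_15_general (n p : ℕ) (X D : Matrix (Fin n) (Fin p) ℂ)
    (H : Matrix (Fin n) (Fin n) ℂ) (hH : H.PosSemidef)
    (K : Matrix (Fin p) (Fin p) ℂ) (hK : K.PosDef)
    (hXK : Xᴴ * H * X = K)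
    (hskew : (Xᴴ * H * D)ᴴ = -(Xᴴ * H * D))
    (W : Matrix (Fin n) (Fin p) ℂ) (hW : W = -((1 - X * K⁻¹ * Xᴴ * H) * D))
    (τ : ℝ)
    (J : Matrix (Fin p) (Fin p) ℂ)
    (hJ : J = K + (τ ^ 2 / 4 : ℝ) • (Wᴴ * H * W) + (τ / 2 : ℝ) • (Xᴴ * H * D))
    (Y : Matrix (Fin n) (Fin p) ℂ)
    (hY : Y = ((2 : ℂ) • X + (τ : ℝ) • W) * J⁻¹ * K - X) :
    IsUnit J ∧ Yᴴ * H * Y = K := by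
  have hXHW : Xᴴ * H * W = 0 := by
    rw [hW, Matrix.mul_neg, conjTranspose_mul_mul_sub_proj_mul_eq_zero hK.isUnit hXK, neg_zero]
  have hWHX : Wᴴ * H * X = 0 := by
    simpa [conjTranspose_mul, hH.1.eq, Matrix.mul_assoc] using congrArg conjTranspose hXHW
  have hsum : J + Jᴴ = (2 : ℂ) • (K + (τ ^ 2 / 4 : ℝ) • (Wᴴ * H * W)) := by
    simp only [hJ, conjTranspose_add, conjTranspose_smul, star_trivial, hK.1.eq, hskew,
      (hH.conjTranspose_mul_mul_same W).1.eq]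
    module
  have hJ_unit : IsUnit J := by
    refine isUnit_of_posDef_add_conjTranspose (hsum ▸ PosDef.smul ?_ two_pos)
    exact hK.add_posSemidef ((hH.conjTranspose_mul_mul_same W).smul (by positivity))
  refine ⟨hJ_unit, hY ▸ conjTranspose_mul_mul_cayley_update hJ_unit hK.1.eq hXK ?_ ?_ ?_⟩
  · simp [Matrix.add_mul, hXK, hWHX]
  · simp [Matrix.mul_add, hXK, hXHW]
  · rw [hsum]
    simp only [conjTranspose_add, conjTranspose_smul, star_trivial, star_ofNat, Matrix.add_mul,
      Matrix.mul_add, Matrix.smul_mul, Matrix.mul_smul, hXK, hXHW, hWHX]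
    module

/-- Constraint-preserving update on the generalized Stiefel manifold `{X : X*HX = K}`:
`J(τ)` is invertible and `Y(τ) = (2X + τW) J(τ)⁻¹ K - X` satisfies `Y*HY = K`. -/
theorem stmt_15 (n p : ℕ) (X D : Matrix (Fin n) (Fin p) ℂ)
    (H : Matrix (Fin n) (Fin n) ℂ) (hH : H.PosSemidef) (hHre : ∀ i j, (H i j).im = 0)
    (K : Matrix (Fin p) (Fin p) ℂ) (hK : K.PosDef) (hKre : ∀ i j, (K i j).im = 0)
    (hXK : Xᴴ * H * X = K)
    (hskew : (Xᴴ * H * D)ᴴ = -(Xᴴ * H * D))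
    (W : Matrix (Fin n) (Fin p) ℂ) (hW : W = -((1 - X * K⁻¹ * Xᴴ * H) * D))
    (τ : ℝ) (hτ : 0 ≤ τ)
    (J : Matrix (Fin p) (Fin p) ℂ)
    (hJ : J = K + (τ ^ 2 / 4 : ℝ) • (Wᴴ * H * W) + (τ / 2 : ℝ) • (Xᴴ * H * D))
    (Y : Matrix (Fin n) (Fin p) ℂ)
    (hY : Y = ((2 : ℂ) • X + (τ : ℝ) • W) * J⁻¹ * K - X) :
    IsUnit J ∧ Yᴴ * H * Y = K :=
  stmt_15_general n p X D H hH K hK hXK hskew W hW τ J hJ Y hY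
end

section
/- Let $X \in \mathbb{R}^{n\times p}$ with $X^T X = I_p$, $G \in \mathbb{R}^{n\times p}$, $D^{(i)} = G_{(i)}e_i^T - X_{(i)}G_{(i)}^T X$, and choose $q$ maximizing $\langle G, D^{(i)}\rangle$ over $i = 1,\ldots,p$. Then $\langle G, D^{(q)}\rangle \geq \frac{1}{p}\langle G, \nabla\mathcal{F}\rangle \geq \frac{1}{2p}\|\nabla\mathcal{F}\|_F^2$, where $\nabla\mathcal{F} = G - XG^T X$. -/
open Matrix

/-- Choosing the column `q` maximizing `⟨G, D⁽ⁱ⁾⟩` gives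
`⟨G, D⁽q⁾⟩ ≥ (1/p)⟨G, ∇F⟩ ≥ (1/(2p))‖∇F‖_F²`. -/
theorem stmt_17 (n p : ℕ) (hp : 0 < p) (X G : Matrix (Fin n) (Fin p) ℝ)
    (hX : Xᵀ * X = 1)
    (D : Fin p → Matrix (Fin n) (Fin p) ℝ)
    (hD : ∀ i, D i = Matrix.vecMulVec (fun a => G a i) (Pi.single i 1) -
      Matrix.vecMulVec (fun a => X a i) (fun a => G a i) * X)
    (nF : Matrix (Fin n) (Fin p) ℝ) (hnF : nF = G - X * Gᵀ * X)
    (q : Fin p) (hq : ∀ i, Matrix.trace (Gᵀ * D i) ≤ Matrix.trace (Gᵀ * D q)) :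
    (1 / (p : ℝ)) * Matrix.trace (Gᵀ * nF) ≤ Matrix.trace (Gᵀ * D q) ∧
      (1 / (2 * (p : ℝ))) * frob nF ^ 2 ≤ (1 / (p : ℝ)) * Matrix.trace (Gᵀ * nF) := by
  have hp' : (0 : ℝ) < p := by exact_mod_cast hp
  have hsum : ∑ i, D i = nF := by
    rw [hnF]
    ext a b
    simp only [hD, Matrix.sum_apply, Matrix.sub_apply, Matrix.vecMulVec_apply,
      Matrix.mul_apply, Matrix.transpose_apply]
    rw [Finset.sum_sub_distrib]
    congr 1
    · simp [Pi.single_apply]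
    · rw [Finset.sum_comm]
      simp [Finset.sum_mul, Finset.mul_sum]
  have htr : Matrix.trace (Gᵀ * nF) = ∑ i, Matrix.trace (Gᵀ * D i) := by
    rw [← hsum, Matrix.mul_sum, Matrix.trace_sum]
  have hle1 : Matrix.trace (Gᵀ * nF) ≤ p * Matrix.trace (Gᵀ * D q) := by
    rw [htr]
    calc ∑ i, Matrix.trace (Gᵀ * D i) ≤ ∑ _i : Fin p, Matrix.trace (Gᵀ * D q) :=
          Finset.sum_le_sum fun i _ => hq i
      _ = p * Matrix.trace (Gᵀ * D q) := by simp
  constructor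
  · rw [div_mul_eq_mul_div, div_le_iff₀ hp', one_mul]
    linarith [hle1]
  · -- key trace identity
    have key : Matrix.trace (nFᵀ * nF)
        + Matrix.trace ((G - X * (Xᵀ * G))ᵀ * (G - X * (Xᵀ * G)))
        = 2 * Matrix.trace (Gᵀ * nF) := by
      rw [hnF]
      have h1 : Matrix.trace (Xᵀ * G * Xᵀ * G) = Matrix.trace (Gᵀ * X * Gᵀ * X) := by
        rw [show Xᵀ * G * Xᵀ * G = (Gᵀ * X * Gᵀ * X)ᵀ by
          simp [Matrix.transpose_mul, Matrix.mul_assoc], Matrix.trace_transpose]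
      have h2 : Matrix.trace (Xᵀ * G * (Gᵀ * X)) = Matrix.trace (Gᵀ * X * (Xᵀ * G)) := by
        rw [Matrix.trace_mul_comm]
      simp only [Matrix.transpose_sub, Matrix.transpose_mul, Matrix.transpose_transpose,
        Matrix.sub_mul, Matrix.mul_sub, Matrix.trace_sub, Matrix.mul_assoc]
      rw [show Xᵀ * (G * (Xᵀ * (X * (Gᵀ * X)))) = Xᵀ * (G * (Gᵀ * X)) by
        rw [show Xᵀ * (X * (Gᵀ * X)) = (Xᵀ * X) * (Gᵀ * X) by simp [Matrix.mul_assoc], hX,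
          one_mul]]
      rw [show Gᵀ * (X * (Xᵀ * (X * (Xᵀ * G)))) = Gᵀ * (X * (Xᵀ * G)) by
        rw [show Xᵀ * (X * (Xᵀ * G)) = (Xᵀ * X) * (Xᵀ * G) by simp [Matrix.mul_assoc], hX,
          one_mul]]
      simp only [← Matrix.mul_assoc] at h1 h2 ⊢
      linarith
    have hB := trace_transpose_mul_self_nonneg (G - X * (Xᵀ * G))
    have hfr : frob nF ^ 2 = Matrix.trace (nFᵀ * nF) := by
      rw [frob, Real.sq_sqrt (trace_transpose_mul_self_nonneg nF)]
    rw [hfr, div_mul_eq_mul_div, div_mul_eq_mul_div, one_mul, one_mul,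
      div_le_div_iff₀ (by linarith) hp']
    nlinarith [key, hB]
end

section
/- Let $x \in \mathbb{R}^n$ with $\|x\|_2 = 1$ and $g \in \mathbb{R}^n$. For $\tau \geq 0$ let $\beta = 1 + \frac{\tau^2}{4}(g^T g - (x^T g)^2)$ and $y(\tau) = \left(\frac{2 + \tau x^T g}{\beta} - 1\right)x - \frac{\tau}{\beta}g$. Then $\|y(\tau)\|_2 = 1$ for all $\tau \geq 0$. -/
/-! With `s = τ² (‖g‖² - ⟪x, g⟫²) / 4` and `β = 1 + s`, expanding the norm gives
`β² ‖y‖² = (1 + τ⟪x, g⟫ - s)(1 - τ⟪x, g⟫ - s) + τ²‖g‖² = (1 - s)² + 4s = β²`,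
and `β ≥ 1` by Cauchy–Schwarz. -/

section SphereUpdate

variable {E : Type*} [NormedAddCommGroup E] [InnerProductSpace ℝ E] {x : E}

lemma inner_sq_le_norm_sq_of_norm_eq_one (hx : ‖x‖ = 1) (g : E) :
    inner ℝ x g ^ 2 ≤ ‖g‖ ^ 2 := by
  have h := abs_real_inner_le_norm x g
  rw [hx, one_mul] at h
  exact sq_le_sq.2 (by rwa [abs_norm])

lemma norm_sq_smul_sub_smul_of_norm_eq_one (hx : ‖x‖ = 1) (c d : ℝ) (g : E) :
    ‖c • x - d • g‖ ^ 2 = c ^ 2 - 2 * c * d * inner ℝ x g + d ^ 2 * ‖g‖ ^ 2 := by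
  rw [norm_sub_sq_real, norm_smul, norm_smul, real_inner_smul_left, real_inner_smul_right, hx,
    Real.norm_eq_abs, Real.norm_eq_abs, mul_pow, mul_pow, sq_abs, sq_abs]
  ring

lemma norm_sphereUpdate_eq_one (hx : ‖x‖ = 1) (g : E) {τ β : ℝ}
    (hβ : β = 1 + τ ^ 2 / 4 * (inner ℝ g g - inner ℝ x g ^ 2)) :
    ‖((2 + τ * inner ℝ x g) / β - 1) • x - (τ / β) • g‖ = 1 := by
  rw [real_inner_self_eq_norm_sq] at hβ
  have hβ_pos : 0 < β := by
    nlinarith [inner_sq_le_norm_sq_of_norm_eq_one hx g, sq_nonneg τ]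
  have hsq : ‖((2 + τ * inner ℝ x g) / β - 1) • x - (τ / β) • g‖ ^ 2 = 1 := by
    rw [norm_sq_smul_sub_smul_of_norm_eq_one hx]
    field_simp
    rw [hβ]
    ring
  exact (pow_eq_one_iff_of_nonneg (norm_nonneg _) two_ne_zero).1 hsq

end SphereUpdate

/-- The sphere (`p = 1`) case of the constraint-preserving update scheme: the curve
`y(τ)` stays on the unit sphere. -/
theorem stmt_18 (n : ℕ) (x g : EuclideanSpace ℝ (Fin n)) (hx : ‖x‖ = 1)
    (β : ℝ → ℝ)
    (hβ : ∀ τ : ℝ, β τ = 1 + τ ^ 2 / 4 * ((inner ℝ g g : ℝ) - (inner ℝ x g : ℝ) ^ 2))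
    (y : ℝ → EuclideanSpace ℝ (Fin n))
    (hy : ∀ τ : ℝ, y τ = ((2 + τ * (inner ℝ x g : ℝ)) / β τ - 1) • x - (τ / β τ) • g) :
    ∀ τ : ℝ, 0 ≤ τ → ‖y τ‖ = 1 := by
  intro τ _
  rw [hy]
  exact norm_sphereUpdate_eq_one hx g (hβ τ)
end

section
/- Let $X \in \mathbb{R}^{n\times p}$ with $\Xi_X = X^T X - I_p$, $E \in \mathbb{R}^{n\times p}$ with $X^T E$ skew-symmetric, $W = -(I_n - XX^T)E$, $J = I_p + \frac{\tau^2}{4}W^T W + \frac{\tau}{2}X^T E$, and $Y = X(2J^{-1} - I_p) + \tau W J^{-1}$. Then $X^T W = \Xi_X X^T E$ and $\Xi_Y := Y^T Y - I_p$ satisfies $\|\Xi_Y\|_F \leq (1 + 2\tau\|X^T E\|_F)\|\Xi_X\|_F$. -/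
/-! With `K = XᵀE` skew, the symmetric part of `J` is `J + Jᵀ = 2 + (τ²/2) WᵀW ⪰ 2`. This makes
`J` invertible and turns both `N = J⁻¹` and the Cayley transform `Q = 2J⁻¹ - 1` into
contractions, since `1 - NNᵀ = N (JJᵀ - 1) Nᵀ` and `1 - QQᵀ = 2 N (J + Jᵀ - 2) Nᵀ`; the same
computation gives `QᵀQ + τ² NᵀWᵀWN = 1`. Expanding `YᵀY` with it leaves
`Ξ_Y = QᵀΞQ + τ M + τ Mᵀ` with `M = Qᵀ (XᵀW) N = Qᵀ Ξ K N`, and multiplying by a contraction does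
not increase the Frobenius norm. -/

open Matrix

open scoped Norms.Frobenius

namespace Matrix

variable {l m n : Type*}

theorem add_transpose_sub_two_of_symm_of_skew [DecidableEq n] {S K : Matrix n n ℝ}
    (hS : Sᵀ = S) (hK : Kᵀ = -K) : (1 + S + K) + (1 + S + K)ᵀ - 2 = (2 : ℝ) • S := by
  rw [transpose_add, transpose_add, transpose_one, hS, hK, two_smul, ← one_add_one_eq_two]
  abel

variable [Fintype l] [Fintype m] [Fintype n]

theorem posSemidef_transpose_mul_self (A : Matrix m n ℝ) : (Aᵀ * A).PosSemidef := by
  simpa only [conjTranspose_eq_transpose_of_trivial] using posSemidef_conjTranspose_mul_self A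

theorem posSemidef_self_mul_transpose (A : Matrix m n ℝ) : (A * Aᵀ).PosSemidef := by
  simpa only [conjTranspose_eq_transpose_of_trivial] using posSemidef_self_mul_conjTranspose A

theorem PosSemidef.mul_mul_transpose_same {A : Matrix n n ℝ} (hA : A.PosSemidef)
    (B : Matrix m n ℝ) : (B * A * Bᵀ).PosSemidef := by
  simpa only [conjTranspose_eq_transpose_of_trivial] using hA.mul_mul_conjTranspose_same B

theorem frobenius_norm_sq_eq_trace_mul_transpose (A : Matrix m n ℝ) :
    ‖A‖ ^ 2 = trace (A * Aᵀ) := by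
  rw [frobenius_norm_def, ← Real.rpow_natCast, ← Real.rpow_mul (by positivity)]
  simp [trace, mul_apply, sq]

theorem frobenius_norm_mul_le_of_posSemidef [DecidableEq m] (A : Matrix l m ℝ) {B : Matrix m n ℝ}
    (hB : (1 - B * Bᵀ).PosSemidef) : ‖A * B‖ ≤ ‖A‖ := by
  have hdiff : ‖A‖ ^ 2 - ‖A * B‖ ^ 2 = trace (A * (1 - B * Bᵀ) * Aᵀ) := by
    simp only [frobenius_norm_sq_eq_trace_mul_transpose, transpose_mul, Matrix.mul_sub,
      Matrix.sub_mul, Matrix.mul_one, trace_sub, Matrix.mul_assoc]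
  have hnonneg : 0 ≤ trace (A * (1 - B * Bᵀ) * Aᵀ) :=
    (hB.mul_mul_transpose_same A).trace_nonneg
  exact (pow_le_pow_iff_left₀ (norm_nonneg _) (norm_nonneg _) two_ne_zero).mp (by linarith)

theorem frobenius_norm_transpose_mul_mul_le [DecidableEq m] [DecidableEq n] {k : Type*} [Fintype k]
    (A : Matrix m n ℝ) {B : Matrix m k ℝ} {C : Matrix n l ℝ}
    (hB : (1 - B * Bᵀ).PosSemidef) (hC : (1 - C * Cᵀ).PosSemidef) : ‖Bᵀ * A * C‖ ≤ ‖A‖ :=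
  calc ‖Bᵀ * A * C‖ ≤ ‖Bᵀ * A‖ := frobenius_norm_mul_le_of_posSemidef _ hC
    _ = ‖Aᵀ * B‖ := by rw [← frobenius_norm_transpose, transpose_mul, transpose_transpose]
    _ ≤ ‖Aᵀ‖ := frobenius_norm_mul_le_of_posSemidef _ hB
    _ = ‖A‖ := frobenius_norm_transpose A

section Accretive

variable [DecidableEq n] {J : Matrix n n ℝ}

theorem posSemidef_transpose_mul_self_sub_one (hJ : (J + Jᵀ - 2).PosSemidef) :
    (Jᵀ * J - 1).PosSemidef := by
  have h : Jᵀ * J - 1 = (J + Jᵀ - 2) + (J - 1)ᵀ * (J - 1) := by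
    rw [← one_add_one_eq_two, transpose_sub, transpose_one]; noncomm_ring
  exact h ▸ hJ.add (posSemidef_transpose_mul_self _)

theorem posSemidef_mul_transpose_self_sub_one (hJ : (J + Jᵀ - 2).PosSemidef) :
    (J * Jᵀ - 1).PosSemidef := by
  have h : J * Jᵀ - 1 = (J + Jᵀ - 2) + (J - 1) * (J - 1)ᵀ := by
    rw [← one_add_one_eq_two, transpose_sub, transpose_one]; noncomm_ring
  exact h ▸ hJ.add (posSemidef_self_mul_transpose _)

theorem isUnit_det_of_posSemidef_add_transpose_sub_two (hJ : (J + Jᵀ - 2).PosSemidef) :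
    IsUnit J.det := by
  have hpos : (Jᵀ * J).PosDef := by
    simpa using PosDef.one.add_posSemidef (posSemidef_transpose_mul_self_sub_one hJ)
  have h := hpos.det_pos
  rw [det_mul, det_transpose] at h
  exact isUnit_iff_ne_zero.mpr fun h0 => by simp [h0] at h

theorem posSemidef_one_sub_inv_mul_transpose (hJ : (J + Jᵀ - 2).PosSemidef) :
    (1 - J⁻¹ * J⁻¹ᵀ).PosSemidef := by
  have hdet := isUnit_det_of_posSemidef_add_transpose_sub_two hJ
  have h : 1 - J⁻¹ * J⁻¹ᵀ = J⁻¹ * (J * Jᵀ - 1) * J⁻¹ᵀ := by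
    rw [Matrix.mul_sub, Matrix.sub_mul, Matrix.mul_one, ← Matrix.mul_assoc, nonsing_inv_mul _ hdet,
      Matrix.one_mul, ← transpose_mul, nonsing_inv_mul _ hdet, transpose_one]
  exact h ▸ (posSemidef_mul_transpose_self_sub_one hJ).mul_mul_transpose_same J⁻¹

theorem one_sub_cayley_mul_transpose (hJ : IsUnit J.det) :
    1 - ((2 : ℝ) • J⁻¹ - 1) * ((2 : ℝ) • J⁻¹ - 1)ᵀ = (2 : ℝ) • (J⁻¹ * (J + Jᵀ - 2) * J⁻¹ᵀ) := by
  have h1 : J⁻¹ * J * J⁻¹ᵀ = J⁻¹ᵀ := by rw [nonsing_inv_mul _ hJ, Matrix.one_mul]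
  have h2 : J⁻¹ * Jᵀ * J⁻¹ᵀ = J⁻¹ := by
    rw [Matrix.mul_assoc, ← transpose_mul, nonsing_inv_mul _ hJ, transpose_one, Matrix.mul_one]
  have e : J⁻¹ * (J + Jᵀ - 2) * J⁻¹ᵀ = J⁻¹ᵀ + J⁻¹ - J⁻¹ * 2 * J⁻¹ᵀ := by
    rw [Matrix.mul_sub, Matrix.mul_add, Matrix.sub_mul, Matrix.add_mul, h1, h2]
  rw [e]
  simp only [transpose_sub, transpose_smul, transpose_one, Matrix.mul_sub, Matrix.sub_mul,
    Matrix.mul_smul, Matrix.smul_mul, Matrix.mul_one, Matrix.one_mul, mul_two, Matrix.add_mul]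
  module

theorem one_sub_transpose_cayley_mul (hJ : IsUnit J.det) :
    1 - ((2 : ℝ) • J⁻¹ - 1)ᵀ * ((2 : ℝ) • J⁻¹ - 1) = (2 : ℝ) • (J⁻¹ᵀ * (J + Jᵀ - 2) * J⁻¹) := by
  have h1 : J⁻¹ᵀ * J * J⁻¹ = J⁻¹ᵀ := by rw [Matrix.mul_assoc, mul_nonsing_inv _ hJ, Matrix.mul_one]
  have h2 : J⁻¹ᵀ * Jᵀ * J⁻¹ = J⁻¹ := by
    rw [← transpose_mul, mul_nonsing_inv _ hJ, transpose_one, Matrix.one_mul]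
  have e : J⁻¹ᵀ * (J + Jᵀ - 2) * J⁻¹ = J⁻¹ᵀ + J⁻¹ - J⁻¹ᵀ * 2 * J⁻¹ := by
    rw [Matrix.mul_sub, Matrix.mul_add, Matrix.sub_mul, Matrix.add_mul, h1, h2]
  rw [e]
  simp only [transpose_sub, transpose_smul, transpose_one, Matrix.mul_sub, Matrix.sub_mul,
    Matrix.mul_smul, Matrix.smul_mul, Matrix.mul_one, Matrix.one_mul, mul_two, Matrix.add_mul]
  module

theorem posSemidef_one_sub_cayley_mul_transpose (hJ : (J + Jᵀ - 2).PosSemidef) :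
    (1 - ((2 : ℝ) • J⁻¹ - 1) * ((2 : ℝ) • J⁻¹ - 1)ᵀ).PosSemidef := by
  rw [one_sub_cayley_mul_transpose (isUnit_det_of_posSemidef_add_transpose_sub_two hJ)]
  exact (hJ.mul_mul_transpose_same J⁻¹).smul zero_le_two

end Accretive

theorem add_smul_mul_transpose_mul_self_sub_one [DecidableEq n] {X W : Matrix m n ℝ}
    {Q N : Matrix n n ℝ} {τ : ℝ} (hQ : 1 - Qᵀ * Q = τ ^ 2 • (Nᵀ * (Wᵀ * W) * N)) :
    (X * Q + τ • (W * N))ᵀ * (X * Q + τ • (W * N)) - 1 =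
      Qᵀ * (Xᵀ * X - 1) * Q + τ • (Qᵀ * (Xᵀ * W) * N) + τ • (Qᵀ * (Xᵀ * W) * N)ᵀ := by
  rw [sub_eq_iff_eq_add'] at hQ
  simp only [transpose_add, transpose_mul, transpose_smul, transpose_transpose, Matrix.add_mul,
    Matrix.mul_add, Matrix.sub_mul, Matrix.mul_sub, Matrix.smul_mul, Matrix.mul_smul,
    Matrix.mul_one, Matrix.mul_assoc] at hQ ⊢
  rw [hQ]
  module

end Matrix

theorem frob_eq_norm {n p : ℕ} (A : Matrix (Fin n) (Fin p) ℝ) : frob A = ‖A‖ := by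
  rw [frob, ← Real.sqrt_sq (norm_nonneg A), ← frobenius_norm_transpose,
    frobenius_norm_sq_eq_trace_mul_transpose, transpose_transpose]

/-- Feasibility-error propagation for the update scheme at an approximately feasible
point: `XᵀW = Ξ_X XᵀE` and `‖Ξ_Y‖_F ≤ (1 + 2τ‖XᵀE‖_F)‖Ξ_X‖_F`. -/
theorem stmt_19 (n p : ℕ) (X E : Matrix (Fin n) (Fin p) ℝ)
    (Ξ : Matrix (Fin p) (Fin p) ℝ) (hΞ : Ξ = Xᵀ * X - 1)
    (hskew : (Xᵀ * E)ᵀ = -(Xᵀ * E))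
    (W : Matrix (Fin n) (Fin p) ℝ) (hW : W = -((1 - X * Xᵀ) * E))
    (τ : ℝ) (hτ : 0 ≤ τ)
    (J : Matrix (Fin p) (Fin p) ℝ)
    (hJ : J = 1 + (τ ^ 2 / 4) • (Wᵀ * W) + (τ / 2) • (Xᵀ * E))
    (Y : Matrix (Fin n) (Fin p) ℝ)
    (hY : Y = X * ((2 : ℝ) • J⁻¹ - 1) + τ • (W * J⁻¹)) :
    Xᵀ * W = Ξ * (Xᵀ * E) ∧
      frob (Yᵀ * Y - 1) ≤ (1 + 2 * τ * frob (Xᵀ * E)) * frob Ξ := by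
  have hXW : Xᵀ * W = Ξ * (Xᵀ * E) := by
    rw [hW, hΞ]
    simp only [Matrix.mul_neg, Matrix.sub_mul, Matrix.mul_sub, Matrix.one_mul, Matrix.mul_assoc]
    abel
  refine ⟨hXW, ?_⟩
  have hsym : J + Jᵀ - 2 = (τ ^ 2 / 2) • (Wᵀ * W) := by
    rw [hJ, add_transpose_sub_two_of_symm_of_skew (by simp)
      (by rw [transpose_smul, hskew, smul_neg]), smul_smul]
    ring_nf
  have hJ_psd : (J + Jᵀ - 2).PosSemidef :=
    hsym ▸ (posSemidef_transpose_mul_self W).smul (by positivity)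
  have hQ : 1 - ((2 : ℝ) • J⁻¹ - 1)ᵀ * ((2 : ℝ) • J⁻¹ - 1) =
      τ ^ 2 • (J⁻¹ᵀ * (Wᵀ * W) * J⁻¹) := by
    rw [one_sub_transpose_cayley_mul (isUnit_det_of_posSemidef_add_transpose_sub_two hJ_psd), hsym,
      Matrix.mul_smul, Matrix.smul_mul, smul_smul]
    ring_nf
  have hQQ := posSemidef_one_sub_cayley_mul_transpose hJ_psd
  have hNN := posSemidef_one_sub_inv_mul_transpose hJ_psd
  rw [frob_eq_norm, frob_eq_norm, frob_eq_norm, hY, add_smul_mul_transpose_mul_self_sub_one hQ, hXW,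
    ← hΞ]
  set M := ((2 : ℝ) • J⁻¹ - 1)ᵀ * (Ξ * (Xᵀ * E)) * J⁻¹
  have hM : ‖M‖ ≤ ‖Ξ‖ * ‖Xᵀ * E‖ :=
    (frobenius_norm_transpose_mul_mul_le _ hQQ hNN).trans (frobenius_norm_mul _ _)
  calc _ ≤ ‖((2 : ℝ) • J⁻¹ - 1)ᵀ * Ξ * ((2 : ℝ) • J⁻¹ - 1)‖ + τ * ‖M‖ + τ * ‖M‖ := by
        refine (norm_add₃_le).trans_eq ?_
        rw [norm_smul, norm_smul, frobenius_norm_transpose, Real.norm_of_nonneg hτ]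
    _ ≤ ‖Ξ‖ + τ * (‖Ξ‖ * ‖Xᵀ * E‖) + τ * (‖Ξ‖ * ‖Xᵀ * E‖) := by
        gcongr
        exact frobenius_norm_transpose_mul_mul_le _ hQQ hQQ
    _ = (1 + 2 * τ * ‖Xᵀ * E‖) * ‖Ξ‖ := by ring
end
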